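/- arXiv:2505.12687 — 8 statements merged into one kernel-verified Lean document; each statement's English description precedes it below -/
import Mathlib

section
/- Let k ≥ 2, q ≥ 3, and r > 2k be integers, and let n be a positive integer divisible by q!. Then q·ρ_{n,1} ∈ ℤ, q·ρ_{n,a/q} ∈ ℤ for each integer a with 1 ≤ a < q/2, and d_{rqn}^k · ρ_{n,0} ∈ ℤ, where d_m = lcm{1,2,…,m}. -/
open Finset

/-- Pochhammer symbol `(x)_m = x(x+1)⋯(x+m−1)` over ℝ. -/
noncomputable def poch (x : ℝ) (m : ℕ) : ℝ := ∏ i ∈ Finset.range m, (x + i)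

/-- The coefficients `C_{n,j}` of the partial fraction decomposition of `R_n`. -/
noncomputable def Cnj (k q r n j : ℕ) : ℝ :=
  (-1 : ℝ) ^ j * (Nat.choose (r * q * n) j) * ((r * q * n : ℝ) - 2 * j) ^ (1 - k % 2) *
    (q : ℝ) ^ (2 * k * q * n) *
    (∏ p ∈ Nat.primeFactors q, (p : ℝ) ^ (2 * k * q * n / (p - 1))) *
    (poch (-(j : ℝ) / q - (q : ℝ) * n) (q * n)) ^ k *
    (poch (-(j : ℝ) / q + (r : ℝ) * n + 1) (q * n)) ^ k /
    ((Nat.factorial (q * n) : ℝ)) ^ (2 * k)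

/-- `ρ_{n,0}`. -/
noncomputable def rho0 (k q r n : ℕ) : ℝ :=
  ((-1 : ℝ) ^ k / q) *
    ((∑ j ∈ Finset.Icc 1 (r * n), ∑ m ∈ Finset.Icc 1 j, Cnj k q r n (q * j) / (m : ℝ) ^ k) +
      ∑ a ∈ Finset.Icc 1 (q - 1), ∑ j ∈ Finset.range (r * n), ∑ m ∈ Finset.range (j + 1),
        Cnj k q r n (q * j + a) / ((m : ℝ) + (a : ℝ) / q) ^ k)

/-- `ρ_{n,a/q}` for `1 ≤ a < q`. -/
noncomputable def rhoA (k q r n a : ℕ) : ℝ :=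
  ((-1 : ℝ) ^ (k - 1) / q) * ∑ j ∈ Finset.range (r * n), Cnj k q r n (q * j + a)

/-- `ρ_{n,1}`. -/
noncomputable def rho1 (k q r n : ℕ) : ℝ :=
  ((-1 : ℝ) ^ (k - 1) / q) * (∑ j ∈ Finset.range (r * n + 1), Cnj k q r n (q * j)) +
    (if Even q then (1 : ℝ) else 0) * (2 ^ k - 1) * rhoA k q r n (q / 2)

/-!
Scaled by `q ^ (q * n)`, each Pochhammer factor of `Cnj k q r n j` becomes a product
`∏ i < qn, (b + q i)` of an integer arithmetic progression, so `Cnj · ((qn)!)^(2k)` is an integer.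
Modulo any `c ∣ (qn)!` coprime to `q`, such a product is `q^(qn) ∏ i < qn, (b' + i)`, which `(qn)!`
divides; the `p`-parts of `(qn)!` for the primes `p ∣ q` are absorbed by `p ^ (2kqn / (p - 1))`,
since `(p - 1) v_p(m!) ≤ m` by Legendre's formula. Hence every `C_{n,j}` is an integer, and for
`q ∣ j` both progressions lie in `qℤ`, which leaves a spare factor `q` in `C_{n,j}`. The claims
follow because `d_{rqn}` is divisible by `m` and by `qm + a`, and
`(m + a/q)^(-k) = q^k (qm + a)^(-k)`.
-/

open scoped Nat

def progProd (b d : ℤ) (m : ℕ) : ℤ := ∏ i ∈ range m, (b + d * i)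

lemma progProd_mul_left (c b d : ℤ) (m : ℕ) :
    progProd (c * b) (c * d) m = c ^ m * progProd b d m := by
  simp only [progProd, mul_assoc, ← mul_add, prod_mul_distrib, prod_const, card_range]

lemma natCast_dvd_progProd {c m : ℕ} (hc : c ∣ m !) {d : ℤ} (hd : IsCoprime d c) (b : ℤ) :
    (c : ℤ) ∣ progProd b d m := by
  obtain ⟨u, v, huv⟩ := hd
  have hmod : progProd b d m ≡ ∏ i ∈ range m, d * (u * b + i) [ZMOD c] :=
    Int.ModEq.prod fun i _ => Int.modEq_iff_dvd.2 ⟨-(v * b), by linear_combination b * huv⟩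
  rw [prod_mul_distrib] at hmod
  have hc' : (c : ℤ) ∣ ∏ i ∈ range m, (u * b + i) :=
    (Int.natCast_dvd_natCast.2 hc).trans (Nat.factorial_coe_dvd_prod m (u * b))
  exact Int.modEq_zero_iff_dvd.1 (hmod.trans (Int.modEq_zero_iff_dvd.2 (hc'.mul_left _)))

lemma pow_mul_poch (c x : ℝ) (m : ℕ) :
    c ^ m * poch x m = ∏ i ∈ range m, (c * x + c * i) := by
  simp only [poch, ← mul_add, prod_mul_distrib, prod_const, card_range]

lemma mul_factorization_factorial_le {p : ℕ} (hp : p.Prime) (c m : ℕ) :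
    c * (m !).factorization p ≤ c * m / (p - 1) := by
  have : Fact p.Prime := ⟨hp⟩
  have hlegendre : (p - 1) * (m !).factorization p ≤ m := by
    rw [Nat.factorization_def _ hp, sub_one_mul_padicValNat_factorial]
    exact Nat.sub_le _ _
  rw [Nat.le_div_iff_mul_le (by have := hp.two_le; omega)]
  calc c * (m !).factorization p * (p - 1) = c * ((p - 1) * (m !).factorization p) := by ring
    _ ≤ c * m := Nat.mul_le_mul_left c hlegendre

lemma factorial_pow_dvd_of_coprime_dvd {q : ℕ} (hq : q ≠ 0) (k m : ℕ) {x y : ℕ}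
    (hx : ∀ c, c ∣ m ! → q.Coprime c → c ∣ x) (hy : ∀ c, c ∣ m ! → q.Coprime c → c ∣ y) :
    m ! ^ (2 * k) ∣ (∏ p ∈ q.primeFactors, p ^ (2 * k * m / (p - 1))) * x ^ k * y ^ k := by
  set N := (∏ p ∈ q.primeFactors, p ^ (2 * k * m / (p - 1))) * x ^ k * y ^ k
  rcases eq_or_ne N 0 with hN | hN
  · rw [hN]
    exact dvd_zero _
  rw [← Nat.factorization_prime_le_iff_dvd (by positivity) hN]
  intro p hp
  rw [Nat.factorization_pow, Finsupp.smul_apply, smul_eq_mul,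
    ← hp.pow_dvd_iff_le_factorization hN]
  by_cases hpq : p ∣ q
  · have hD : p ^ (2 * k * m / (p - 1)) ∣ ∏ p ∈ q.primeFactors, p ^ (2 * k * m / (p - 1)) :=
      dvd_prod_of_mem _ (Nat.mem_primeFactors.2 ⟨hp, hpq, hq⟩)
    exact (pow_dvd_pow p (mul_factorization_factorial_le hp _ _)).trans
      ((hD.mul_right _).mul_right _)
  · have hcop : q.Coprime (p ^ (m !).factorization p) :=
      ((hp.coprime_iff_not_dvd.2 hpq).symm).pow_right _
    have hpv : p ^ (m !).factorization p ∣ m ! := Nat.ordProj_dvd _ _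
    calc p ^ (2 * k * (m !).factorization p)
        = (p ^ (m !).factorization p) ^ k * (p ^ (m !).factorization p) ^ k := by ring
      _ ∣ x ^ k * y ^ k :=
        mul_dvd_mul (pow_dvd_pow_of_dvd (hx _ hpv hcop) k) (pow_dvd_pow_of_dvd (hy _ hpv hcop) k)
      _ ∣ N := Dvd.intro_left _ (mul_assoc _ _ _).symm

lemma natCast_factorial_pow_dvd_progProd {q : ℕ} (hq : q ≠ 0) (k m : ℕ) (b b' : ℤ) :
    ((m ! ^ (2 * k) : ℕ) : ℤ) ∣
      ((∏ p ∈ q.primeFactors, p ^ (2 * k * m / (p - 1)) : ℕ) : ℤ) *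
        progProd b q m ^ k * progProd b' q m ^ k := by
  have hprog (b : ℤ) (c : ℕ) (hc : c ∣ m !) (hqc : q.Coprime c) : c ∣ (progProd b q m).natAbs :=
    Int.natCast_dvd.1 (natCast_dvd_progProd hc (Nat.isCoprime_iff_coprime.2 hqc) b)
  rw [Int.natCast_dvd]
  simpa only [Int.natAbs_mul, Int.natAbs_pow, Int.natAbs_natCast] using
    factorial_pow_dvd_of_coprime_dvd hq k m (hprog b) (hprog b')

lemma Cnj_mul_factorial_pow (k q r n j : ℕ) (hq : q ≠ 0) :
    Cnj k q r n j * (((q * n)! ^ (2 * k) : ℕ) : ℝ) =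
      (((-1) ^ j * (r * q * n).choose j * ((r * q * n : ℤ) - 2 * j) ^ (1 - k % 2) *
        (((∏ p ∈ q.primeFactors, p ^ (2 * k * q * n / (p - 1)) : ℕ) : ℤ) *
          progProd (-j - q * (q * n)) q (q * n) ^ k *
          progProd (-j + q * (r * n + 1)) q (q * n) ^ k) : ℤ) : ℝ) := by
  have hq' : (q : ℝ) ≠ 0 := Nat.cast_ne_zero.2 hq
  have hpoch (b : ℤ) (x : ℝ) (hx : (q : ℝ) * x = b) :
      (q : ℝ) ^ (q * n) * poch x (q * n) = progProd b q (q * n) := by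
    rw [pow_mul_poch, progProd]
    push_cast
    rw [hx]
  have h₁ := hpoch (-j - q * (q * n)) (-(j : ℝ) / q - q * n) (by push_cast; field_simp)
  have h₂ := hpoch (-j + q * (r * n + 1)) (-(j : ℝ) / q + r * n + 1)
    (by push_cast; field_simp; ring)
  have hpow : (q : ℝ) ^ (2 * k * q * n) = ((q : ℝ) ^ (q * n)) ^ k * ((q : ℝ) ^ (q * n)) ^ k := by
    ring
  rw [Cnj]
  push_cast
  rw [← h₁, ← h₂, hpow]
  field_simp
  ring

lemma mem_bot_of_mul_natCast_eq {x : ℝ} {N : ℕ} {z : ℤ} (hN : N ≠ 0) (h : x * N = z)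
    (hdvd : (N : ℤ) ∣ z) : x ∈ (⊥ : Subring ℝ) := by
  obtain ⟨w, rfl⟩ := hdvd
  refine Subring.mem_bot.2 ⟨w, ?_⟩
  have hN' : (N : ℝ) ≠ 0 := Nat.cast_ne_zero.2 hN
  push_cast at h
  exact (mul_right_cancel₀ hN' (h.trans (mul_comm _ _))).symm

lemma Cnj_mem_bot (k r n j : ℕ) {q : ℕ} (hq : q ≠ 0) : Cnj k q r n j ∈ (⊥ : Subring ℝ) := by
  refine mem_bot_of_mul_natCast_eq (by positivity) (Cnj_mul_factorial_pow k q r n j hq)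
    (Dvd.dvd.mul_left ?_ _)
  have := natCast_factorial_pow_dvd_progProd hq k (q * n) (-j - q * (q * n)) (-j + q * (r * n + 1))
  rwa [← mul_assoc (2 * k) q n] at this

lemma Cnj_div_mem_bot (r j : ℕ) {k q n : ℕ} (hk : k ≠ 0) (hq : q ≠ 0) (hn : n ≠ 0) :
    Cnj k q r n (q * j) / q ∈ (⊥ : Subring ℝ) := by
  have hq' : (q : ℝ) ≠ 0 := Nat.cast_ne_zero.2 hq
  have h : Cnj k q r n (q * j) / q * ((q * (q * n)! ^ (2 * k) : ℕ) : ℝ) =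
      Cnj k q r n (q * j) * (((q * n)! ^ (2 * k) : ℕ) : ℝ) := by
    push_cast
    field_simp
  refine mem_bot_of_mul_natCast_eq (by positivity)
    (h.trans (Cnj_mul_factorial_pow k q r n (q * j) hq)) ?_
  have hF (b : ℤ) : (((q * n)! : ℕ) : ℤ) ∣ progProd b 1 (q * n) :=
    natCast_dvd_progProd dvd_rfl isCoprime_one_left b
  have hq_dvd : (q : ℤ) ∣ ((q : ℤ) ^ (q * n)) ^ k :=
    (dvd_pow_self _ (by positivity)).trans (dvd_pow_self _ hk)
  have h₁ : progProd (-(q * j : ℕ) - q * (q * n)) q (q * n) =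
      q ^ (q * n) * progProd (-j - q * n) 1 (q * n) := by
    rw [← progProd_mul_left]
    congr 1 <;> push_cast <;> ring
  have h₂ : progProd (-(q * j : ℕ) + q * (r * n + 1)) q (q * n) =
      q ^ (q * n) * progProd (-j + (r * n + 1)) 1 (q * n) := by
    rw [← progProd_mul_left]
    congr 1 <;> push_cast <;> ring
  have hprod_dvd : (q : ℤ) * (((q * n)! : ℕ) : ℤ) ^ k * (((q * n)! : ℕ) : ℤ) ^ k ∣
      progProd (-(q * j : ℕ) - q * (q * n)) q (q * n) ^ k *
        progProd (-(q * j : ℕ) + q * (r * n + 1)) q (q * n) ^ k := by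
    rw [h₁, h₂, mul_pow]
    exact mul_dvd_mul (mul_dvd_mul hq_dvd (pow_dvd_pow_of_dvd (hF _) k))
      (pow_dvd_pow_of_dvd (dvd_mul_of_dvd_right (hF _) _) k)
  rw [show ((q * (q * n)! ^ (2 * k) : ℕ) : ℤ) = q * ((q * n)! : ℕ) ^ k * ((q * n)! : ℕ) ^ k by
    push_cast; ring]
  exact dvd_mul_of_dvd_right ((dvd_mul_of_dvd_right hprod_dvd _).trans (mul_assoc _ _ _).symm.dvd) _

lemma pow_mul_rho0 (d : ℝ) {k q : ℕ} (hk : k ≠ 0) (hq : q ≠ 0) (r n : ℕ) :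
    d ^ k * rho0 k q r n = (-1) ^ k *
      ((∑ j ∈ Icc 1 (r * n), ∑ m ∈ Icc 1 j, (d / m) ^ k * (Cnj k q r n (q * j) / q)) +
        ∑ a ∈ Icc 1 (q - 1), ∑ j ∈ range (r * n), ∑ m ∈ range (j + 1),
          (d / (q * m + a : ℕ)) ^ k * (q : ℝ) ^ (k - 1) * Cnj k q r n (q * j + a)) := by
  have hq' : (q : ℝ) ≠ 0 := Nat.cast_ne_zero.2 hq
  obtain ⟨k, rfl⟩ : ∃ k', k = k' + 1 := ⟨k - 1, by omega⟩
  rw [rho0, Nat.add_sub_cancel]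
  simp only [mul_add, mul_sum]
  congr 1
  · refine sum_congr rfl fun j _ => sum_congr rfl fun m _ => ?_
    ring
  · refine sum_congr rfl fun a _ => sum_congr rfl fun j _ => sum_congr rfl fun m _ => ?_
    rw [show (m : ℝ) + a / q = (q * m + a : ℕ) / q by push_cast; field_simp, div_pow,
      div_div_eq_mul_div, div_pow]
    field_simp
    ring

lemma natCast_div_mem_bot {a b : ℕ} (h : b ∣ a) : (a : ℝ) / b ∈ (⊥ : Subring ℝ) := by
  rw [← Nat.cast_div_charZero h]
  exact natCast_mem _ _

lemma natCast_mul_rhoA_mem_bot (k r n a : ℕ) {q : ℕ} (hq : q ≠ 0) :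
    (q : ℝ) * rhoA k q r n a ∈ (⊥ : Subring ℝ) := by
  have hq' : (q : ℝ) ≠ 0 := Nat.cast_ne_zero.2 hq
  rw [rhoA, ← mul_assoc, mul_div_cancel₀ _ hq']
  exact mul_mem (pow_mem (neg_mem (one_mem _)) _) (sum_mem fun j _ => Cnj_mem_bot _ _ _ _ hq)

lemma natCast_mul_rho1_mem_bot (k r n : ℕ) {q : ℕ} (hq : q ≠ 0) :
    (q : ℝ) * rho1 k q r n ∈ (⊥ : Subring ℝ) := by
  have hq' : (q : ℝ) ≠ 0 := Nat.cast_ne_zero.2 hq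
  have hite : (if Even q then (1 : ℝ) else 0) * (2 ^ k - 1) ∈ (⊥ : Subring ℝ) :=
    Subring.mem_bot.2 ⟨if Even q then 2 ^ k - 1 else 0, by split_ifs <;> push_cast <;> ring⟩
  rw [rho1, mul_add, ← mul_assoc, mul_div_cancel₀ _ hq', mul_left_comm]
  exact add_mem (mul_mem (pow_mem (neg_mem (one_mem _)) _)
    (sum_mem fun j _ => Cnj_mem_bot _ _ _ _ hq))
    (mul_mem hite (natCast_mul_rhoA_mem_bot _ _ _ _ hq))

lemma lcm_pow_mul_rho0_mem_bot (r : ℕ) {k q n : ℕ} (hk : k ≠ 0) (hq : q ≠ 0) (hn : n ≠ 0) :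
    (((Icc 1 (r * q * n)).lcm id : ℕ) : ℝ) ^ k * rho0 k q r n ∈ (⊥ : Subring ℝ) := by
  have hdvd {m : ℕ} (h₀ : 1 ≤ m) (h₁ : m ≤ q * (r * n)) : m ∣ (Icc 1 (r * q * n)).lcm id :=
    dvd_lcm (mem_Icc.2 ⟨h₀, h₁.trans_eq (by ring)⟩)
  have hdvd₁ {j m : ℕ} (hj : j ∈ Icc 1 (r * n)) (hm : m ∈ Icc 1 j) :
      m ∣ (Icc 1 (r * q * n)).lcm id := by
    rw [mem_Icc] at hj hm
    exact hdvd hm.1 (hm.2.trans (hj.2.trans (Nat.le_mul_of_pos_left _ (Nat.pos_of_ne_zero hq))))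
  have hdvd₂ {a j m : ℕ} (ha : a ∈ Icc 1 (q - 1)) (hj : j ∈ range (r * n))
      (hm : m ∈ range (j + 1)) :
      q * m + a ∣ (Icc 1 (r * q * n)).lcm id := by
    rw [mem_Icc] at ha
    rw [mem_range] at hj hm
    refine hdvd (by omega) ?_
    calc q * m + a ≤ q * (m + 1) := by rw [mul_add_one]; omega
      _ ≤ q * (r * n) := Nat.mul_le_mul_left _ (by omega)
  rw [pow_mul_rho0 _ hk hq]
  exact mul_mem (pow_mem (neg_mem (one_mem _)) _) (add_mem
    (sum_mem fun j hj => sum_mem fun m hm =>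
      mul_mem (pow_mem (natCast_div_mem_bot (hdvd₁ hj hm)) _) (Cnj_div_mem_bot _ _ hk hq hn))
    (sum_mem fun a ha => sum_mem fun j hj => sum_mem fun m hm =>
      mul_mem (mul_mem (pow_mem (natCast_div_mem_bot (hdvd₂ ha hj hm)) _)
        (pow_mem (natCast_mem _ _) _)) (Cnj_mem_bot _ _ _ _ hq)))

theorem stmt_3_general (k q r n : ℕ) (hk : 2 ≤ k) (hq : 3 ≤ q) (hn : 0 < n) :
    (∃ z : ℤ, (q : ℝ) * rho1 k q r n = (z : ℝ)) ∧
    (∀ a : ℕ, 1 ≤ a → 2 * a < q → ∃ z : ℤ, (q : ℝ) * rhoA k q r n a = (z : ℝ)) ∧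
    (∃ z : ℤ, (((Finset.Icc 1 (r * q * n)).lcm id : ℕ) : ℝ) ^ k * rho0 k q r n = (z : ℝ)) := by
  have hq₀ : q ≠ 0 := by omega
  simp only [eq_comm (a := _ * _), ← Subring.mem_bot]
  exact ⟨natCast_mul_rho1_mem_bot k r n hq₀, fun a _ _ => natCast_mul_rhoA_mem_bot k r n a hq₀,
    lcm_pow_mul_rho0_mem_bot r (by omega) hq₀ hn.ne'⟩

theorem stmt_3 (k q r n : ℕ) (hk : 2 ≤ k) (hq : 3 ≤ q) (hr : 2 * k < r)
    (hn : 0 < n) (hfac : Nat.factorial q ∣ n) :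
    (∃ z : ℤ, (q : ℝ) * rho1 k q r n = (z : ℝ)) ∧
    (∀ a : ℕ, 1 ≤ a → 2 * a < q → ∃ z : ℤ, (q : ℝ) * rhoA k q r n a = (z : ℝ)) ∧
    (∃ z : ℤ, (((Finset.Icc 1 (r * q * n)).lcm id : ℕ) : ℝ) ^ k * rho0 k q r n = (z : ℝ)) :=
  stmt_3_general k q r n hk hq hn
end

section
/- Let k ≥ 2, q ≥ 3, and r > 2k be integers. Set β = rq·log 2 + k((2q + r)·log(q + r/2) − r·log(r/2) + 2q ∑_{p | q, p prime} (log p)/(p − 1)). Then for every ε > 0 there exists N such that for every positive multiple n of q! with n ≥ N, max{|ρ_{n,0}|, |ρ_{n,1}|, |ρ_{n,a/q}| : 1 ≤ a < q/2} ≤ exp((β + ε)n). -/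
/-!
Every `ρ` is a sum of polynomially many (in `n`) coefficients `C_{n,j}` with weights of absolute
value at most `q ^ k`, so it suffices to bound `|C_{n,j}|` by a polynomial in `n` times `e^{βn}`.
Writing `j / q = m + a / q`, each Pochhammer symbol divided by `(qn)!` is at most a binomial
coefficient, and by Vandermonde their product is at most `((2q+r)n+1) · C((2q+r)n, 2qn)`. The
binomial theorem with the weights `q` and `r / 2`, proportional to `2qn` and `rn`, gives
`q^{2qn} C((2q+r)n, 2qn) ≤ (q + r/2)^{(2q+r)n} / (r/2)^{rn}`, the `k`-th power of which is the
middle part of `e^{βn}`; `C(rqn, j) ≤ 2^{rqn}` and `p^{⌊2kqn/(p-1)⌋} ≤ e^{2kqn log p/(p-1)}` give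
the rest.
-/

open Finset

/-- The constant `β = rq log 2 + k((2q+r)log(q+r/2) − r log(r/2) + 2q ∑_{p|q} log p/(p−1))`. -/
noncomputable def betaConst (k q r : ℕ) : ℝ :=
  (r : ℝ) * q * Real.log 2 +
    (k : ℝ) * (((2 * q + r : ℕ) : ℝ) * Real.log ((q : ℝ) + (r : ℝ) / 2)
      - (r : ℝ) * Real.log ((r : ℝ) / 2)
      + 2 * (q : ℝ) * ∑ p ∈ Nat.primeFactors q, Real.log p / ((p : ℝ) - 1))

open Nat Filter

lemma choose_mul_pow_mul_pow_le_add_pow {x y : ℝ} (hx : 0 ≤ x) (hy : 0 ≤ y) (a b : ℕ) :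
    ((a + b).choose a : ℝ) * x ^ a * y ^ b ≤ (x + y) ^ (a + b) := by
  have hterm := single_le_sum (f := fun m => x ^ m * y ^ (a + b - m) * ((a + b).choose m : ℝ))
    (fun _ _ => by positivity) (mem_range.2 (by omega : a < a + b + 1))
  rw [← add_pow, Nat.add_sub_cancel_left] at hterm
  linarith

lemma choose_mul_choose_le_add_choose (a b c d : ℕ) :
    a.choose c * b.choose d ≤ (a + b).choose (c + d) := by
  rw [Nat.add_choose_eq]
  exact single_le_sum (f := fun ij : ℕ × ℕ => a.choose ij.1 * b.choose ij.2)
    (fun _ _ => Nat.zero_le _) (mem_antidiagonal.2 rfl : (c, d) ∈ antidiagonal (c + d))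

lemma succ_choose_le_succ_mul_choose {E K : ℕ} (h : K ≤ E) :
    (E + 1).choose K ≤ (E + 1) * E.choose K := by
  have := Nat.choose_mul_succ_eq E K
  nlinarith [Nat.le_mul_of_pos_right ((E + 1).choose K) (by omega : 0 < E + 1 - K)]

lemma poch_nonneg {x : ℝ} (hx : 0 ≤ x) (M : ℕ) : 0 ≤ poch x M :=
  prod_nonneg fun _ _ => by positivity

lemma poch_le_poch {x y : ℝ} (hx : 0 ≤ x) (hxy : x ≤ y) (M : ℕ) : poch x M ≤ poch y M :=
  prod_le_prod (fun _ _ => by positivity) fun _ _ => by linarith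

lemma poch_natCast_add_one (d M : ℕ) : poch ((d : ℝ) + 1) M = M ! * (d + M).choose M := by
  rw [← Nat.cast_succ, poch]
  exact_mod_cast (Nat.ascFactorial_eq_prod_range _ M).symm.trans
    (Nat.ascFactorial_eq_factorial_mul_choose d M)

lemma poch_neg (z : ℝ) (M : ℕ) : poch (-z) M = (-1) ^ M * poch (z - M + 1) M := by
  rw [poch, ← prod_range_reflect, poch]
  calc ∏ i ∈ range M, (-z + ((M - 1 - i : ℕ) : ℝ))
      = ∏ i ∈ range M, (-1) * (z - M + 1 + i) := by
        refine prod_congr rfl fun i hi => ?_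
        have hi : i < M := mem_range.1 hi
        rw [Nat.cast_sub (by omega), Nat.cast_sub (by omega)]
        push_cast
        ring
    _ = (-1) ^ M * ∏ i ∈ range M, (z - M + 1 + i) := by rw [← pow_card_mul_prod, card_range]

lemma abs_poch_le_factorial_mul_choose {x : ℝ} {d : ℕ} (h0 : 0 ≤ x) (hd : x ≤ d + 1) (M : ℕ) :
    |poch x M| ≤ M ! * (d + M).choose M := by
  rw [abs_of_nonneg (poch_nonneg h0 M), ← poch_natCast_add_one]
  exact poch_le_poch h0 hd M

lemma abs_poch_mul_abs_poch_le {y : ℝ} {m N M : ℕ} (hm : m ≤ N) (hy₁ : (m : ℝ) ≤ y)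
    (hy₂ : y ≤ m + 1) :
    |poch (-y - M) M| * |poch (-y + N + 1) M| ≤ (M ! : ℝ) ^ 2 * (N + 2 * M + 1).choose (2 * M) := by
  have hm₀ : (0 : ℝ) ≤ m := m.cast_nonneg
  have h₁ : |poch (-y - M) M| ≤ M ! * (m + 1 + M).choose M := by
    rw [show -y - M = -(y + M) by ring, poch_neg, abs_mul, abs_pow, abs_neg, abs_one, one_pow,
      one_mul, show y + M - M + 1 = y + 1 by ring]
    exact abs_poch_le_factorial_mul_choose (by linarith) (by push_cast; linarith) M
  have h₂ : |poch (-y + N + 1) M| ≤ M ! * (N - m + M).choose M := by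
    have hmN : (m : ℝ) ≤ N := by exact_mod_cast hm
    exact abs_poch_le_factorial_mul_choose (by linarith) (by rw [Nat.cast_sub hm]; linarith) M
  have hV : ((m + 1 + M).choose M * (N - m + M).choose M : ℝ) ≤ (N + 2 * M + 1).choose (2 * M) := by
    have := choose_mul_choose_le_add_choose (m + 1 + M) (N - m + M) M M
    rw [show m + 1 + M + (N - m + M) = N + 2 * M + 1 by omega, ← two_mul] at this
    exact_mod_cast this
  calc |poch (-y - M) M| * |poch (-y + N + 1) M|
      ≤ (M ! * (m + 1 + M).choose M) * (M ! * (N - m + M).choose M) :=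
        mul_le_mul h₁ h₂ (abs_nonneg _) (by positivity)
    _ = (M ! : ℝ) ^ 2 * ((m + 1 + M).choose M * (N - m + M).choose M) := by ring
    _ ≤ (M ! : ℝ) ^ 2 * (N + 2 * M + 1).choose (2 * M) := by gcongr

noncomputable def binomExponent (q r : ℕ) : ℝ :=
  ((2 * q + r : ℕ) : ℝ) * Real.log ((q : ℝ) + r / 2) - r * Real.log ((r : ℝ) / 2)

lemma exp_mul_binomExponent (q r n : ℕ) (hr : 0 < r) :
    Real.exp (n * binomExponent q r) =
      ((q : ℝ) + r / 2) ^ ((2 * q + r) * n) / ((r : ℝ) / 2) ^ (r * n) := by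
  rw [binomExponent, show (n : ℝ) * (((2 * q + r : ℕ) : ℝ) * Real.log ((q : ℝ) + r / 2)
      - r * Real.log ((r : ℝ) / 2)) = (((2 * q + r) * n : ℕ) : ℝ) * Real.log ((q : ℝ) + r / 2)
      - ((r * n : ℕ) : ℝ) * Real.log ((r : ℝ) / 2) by push_cast; ring,
    Real.exp_sub, Real.exp_nat_mul, Real.exp_nat_mul, Real.exp_log (by positivity),
    Real.exp_log (by positivity)]

lemma pow_mul_choose_le_exp_binomExponent (q r n : ℕ) (hr : 0 < r) :
    (q : ℝ) ^ (2 * q * n) * ((2 * q + r) * n).choose (2 * q * n) ≤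
      Real.exp (n * binomExponent q r) := by
  rw [exp_mul_binomExponent q r n hr, le_div_iff₀ (by positivity)]
  have := choose_mul_pow_mul_pow_le_add_pow (x := q) (y := r / 2) (by positivity) (by positivity)
    (2 * q * n) (r * n)
  rw [show 2 * q * n + r * n = (2 * q + r) * n by ring] at this
  linarith

lemma prod_pow_div_pred_le_exp (s : Finset ℕ) (hs : ∀ p ∈ s, 2 ≤ p) (L : ℕ) :
    ∏ p ∈ s, (p : ℝ) ^ (L / (p - 1)) ≤ Real.exp (L * ∑ p ∈ s, Real.log p / ((p : ℝ) - 1)) := by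
  rw [mul_sum, Real.exp_sum]
  refine prod_le_prod (fun _ _ => by positivity) fun p hp => ?_
  have hp : 2 ≤ p := hs p hp
  have hp₁ : (1 : ℝ) < p := by exact_mod_cast hp
  rw [← Real.exp_log (by positivity : (0 : ℝ) < p), ← Real.exp_nat_mul,
    Real.exp_log (by positivity), Real.exp_le_exp]
  have hdiv : ((L / (p - 1) : ℕ) : ℝ) ≤ L / ((p : ℝ) - 1) := by
    simpa [Nat.cast_sub (by omega : 1 ≤ p)] using Nat.cast_div_le (α := ℝ) (m := L) (n := p - 1)
  calc ((L / (p - 1) : ℕ) : ℝ) * Real.log p ≤ L / ((p : ℝ) - 1) * Real.log p :=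
        mul_le_mul_of_nonneg_right hdiv (Real.log_nonneg hp₁.le)
    _ = L * (Real.log p / ((p : ℝ) - 1)) := by ring

lemma pow_mul_abs_poch_mul_abs_poch_le {q r n j : ℕ} (hq : 0 < q) (hr : 0 < r)
    (hj : j ≤ r * q * n) :
    (q : ℝ) ^ (2 * q * n) *
        (|poch (-(j : ℝ) / q - q * n) (q * n)| * |poch (-(j : ℝ) / q + r * n + 1) (q * n)|) ≤
      ((q * n)! : ℝ) ^ 2 * (((2 * q + r) * n + 1 : ℝ) * Real.exp (n * binomExponent q r)) := by
  have hq' : (0 : ℝ) < q := by exact_mod_cast hq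
  have hy₁ : ((j / q : ℕ) : ℝ) ≤ (j : ℝ) / q := Nat.cast_div_le
  have hy₂ : (j : ℝ) / q ≤ (j / q : ℕ) + 1 := by
    rw [div_le_iff₀ hq']
    exact_mod_cast (Nat.lt_mul_div_succ j hq).le.trans_eq (mul_comm _ _)
  have hm : j / q ≤ r * n := Nat.div_le_of_le_mul (by linarith [hj] : j ≤ q * (r * n))
  have hpoch := abs_poch_mul_abs_poch_le (M := q * n) hm hy₁ hy₂
  have hchoose : (r * n + 2 * (q * n) + 1).choose (2 * (q * n)) ≤
      ((2 * q + r) * n + 1) * ((2 * q + r) * n).choose (2 * q * n) := by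
    convert succ_choose_le_succ_mul_choose (E := (2 * q + r) * n) (K := 2 * q * n) (by nlinarith)
      using 2 <;> ring
  replace hchoose := (Nat.cast_le (α := ℝ)).2 hchoose
  have hexp := pow_mul_choose_le_exp_binomExponent q r n hr
  push_cast at hpoch hchoose
  rw [neg_div]
  calc (q : ℝ) ^ (2 * q * n) *
        (|poch (-((j : ℝ) / q) - q * n) (q * n)| * |poch (-((j : ℝ) / q) + r * n + 1) (q * n)|)
      ≤ (q : ℝ) ^ (2 * q * n) * (((q * n)! : ℝ) ^ 2 *
          (((2 * q + r) * n + 1 : ℝ) * ((2 * q + r) * n).choose (2 * q * n))) :=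
        mul_le_mul_of_nonneg_left (hpoch.trans (by gcongr)) (by positivity)
    _ = ((q * n)! : ℝ) ^ 2 * (((2 * q + r) * n + 1 : ℝ) *
          ((q : ℝ) ^ (2 * q * n) * ((2 * q + r) * n).choose (2 * q * n))) := by ring
    _ ≤ _ := by gcongr

lemma two_pow_mul_exp_mul_exp_pow_eq (k q r n : ℕ) :
    (2 : ℝ) ^ (r * q * n) *
        Real.exp ((2 * k * q * n : ℕ) * ∑ p ∈ q.primeFactors, Real.log p / ((p : ℝ) - 1)) *
        Real.exp (n * binomExponent q r) ^ k =
      Real.exp (betaConst k q r * n) := by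
  rw [← Real.exp_log (two_pos : (0 : ℝ) < 2), ← Real.exp_nat_mul, ← Real.exp_nat_mul,
    ← Real.exp_add, ← Real.exp_add, betaConst, binomExponent]
  congr 1
  push_cast
  ring

noncomputable def cnjBound (k q r n : ℕ) : ℝ :=
  (r * q * n + 1 : ℝ) * ((2 * q + r) * n + 1 : ℝ) ^ k * Real.exp (betaConst k q r * n)

lemma abs_Cnj_le {k q r n j : ℕ} (hq : 0 < q) (hr : 0 < r) (hj : j ≤ r * q * n) :
    |Cnj k q r n j| ≤ cnjBound k q r n := by
  set X := (q : ℝ) ^ (2 * q * n) *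
    (|poch (-(j : ℝ) / q - q * n) (q * n)| * |poch (-(j : ℝ) / q + r * n + 1) (q * n)|) /
      ((q * n)! : ℝ) ^ 2 with hX
  have habs : |Cnj k q r n j| = (r * q * n).choose j * |(r * q * n : ℝ) - 2 * j| ^ (1 - k % 2) *
      (∏ p ∈ q.primeFactors, (p : ℝ) ^ (2 * k * q * n / (p - 1))) * X ^ k := by
    rw [Cnj, hX, abs_div, show 2 * k * q * n = 2 * q * n * k by ring, pow_mul]
    simp only [abs_mul, abs_pow, abs_neg, abs_one, one_pow, one_mul, Nat.abs_cast, abs_prod]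
    ring
  have hlin : |(r * q * n : ℝ) - 2 * j| ^ (1 - k % 2) ≤ r * q * n + 1 := by
    have hj' : (j : ℝ) ≤ r * q * n := by exact_mod_cast hj
    have hj₀ : (0 : ℝ) ≤ j := j.cast_nonneg
    calc |(r * q * n : ℝ) - 2 * j| ^ (1 - k % 2) ≤ (r * q * n + 1 : ℝ) ^ (1 - k % 2) :=
          pow_le_pow_left₀ (abs_nonneg _) (abs_le.2 ⟨by linarith, by linarith⟩) _
      _ ≤ r * q * n + 1 := by
          simpa using pow_le_pow_right₀ (by linarith : (1 : ℝ) ≤ r * q * n + 1)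
            (by omega : 1 - k % 2 ≤ 1)
  have hprimes := prod_pow_div_pred_le_exp q.primeFactors
    (fun p hp => (Nat.prime_of_mem_primeFactors hp).two_le) (2 * k * q * n)
  have hXle : X ≤ ((2 * q + r) * n + 1 : ℝ) * Real.exp (n * binomExponent q r) := by
    rw [hX, div_le_iff₀' (by positivity)]
    exact pow_mul_abs_poch_mul_abs_poch_le hq hr hj
  rw [habs, cnjBound, ← two_pow_mul_exp_mul_exp_pow_eq]
  calc _ ≤ (2 : ℝ) ^ (r * q * n) * (r * q * n + 1 : ℝ) *
        Real.exp ((2 * k * q * n : ℕ) * ∑ p ∈ q.primeFactors, Real.log p / ((p : ℝ) - 1)) *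
        (((2 * q + r) * n + 1 : ℝ) * Real.exp (n * binomExponent q r)) ^ k := by
        gcongr
        exact_mod_cast Nat.choose_le_two_pow _ _
    _ = _ := by rw [mul_pow]; ring

lemma abs_sum_le_of_abs_le {ι : Type*} {s : Finset ι} {f : ι → ℝ} {B : ℝ} {N : ℕ} (hB : 0 ≤ B)
    (hs : #s ≤ N) (h : ∀ i ∈ s, |f i| ≤ B) : |∑ i ∈ s, f i| ≤ N * B := by
  calc |∑ i ∈ s, f i| ≤ #s * B := by
        simpa using (abs_sum_le_sum_abs f s).trans (sum_le_card_nsmul s _ B h)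
    _ ≤ N * B := by gcongr

lemma abs_neg_one_pow_div_le {q : ℕ} (hq : 0 < q) (i : ℕ) : |(-1 : ℝ) ^ i / q| ≤ 1 := by
  rw [abs_div, abs_pow, abs_neg, abs_one, one_pow, Nat.abs_cast]
  exact div_le_one_of_le₀ (by exact_mod_cast hq) q.cast_nonneg

section RhoBounds

variable {k q r n : ℕ} {B : ℝ}

lemma abs_rhoA_le (hq : 0 < q) (hC : ∀ j ≤ r * q * n, |Cnj k q r n j| ≤ B) {a : ℕ} (ha : a < q) :
    |rhoA k q r n a| ≤ r * n * B := by
  have hB : 0 ≤ B := (abs_nonneg _).trans (hC 0 (Nat.zero_le _))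
  have hsum : |∑ j ∈ range (r * n), Cnj k q r n (q * j + a)| ≤ ((r * n : ℕ) : ℝ) * B :=
    abs_sum_le_of_abs_le hB (card_range _).le fun j hj => hC _ (by
      have := mem_range.1 hj
      nlinarith)
  rw [rhoA, abs_mul]
  push_cast at hsum
  simpa using mul_le_mul (abs_neg_one_pow_div_le hq (k - 1)) hsum (abs_nonneg _) zero_le_one

lemma abs_rho1_le (hq : 0 < q) (hC : ∀ j ≤ r * q * n, |Cnj k q r n j| ≤ B) :
    |rho1 k q r n| ≤ (r * n + 1 + 2 ^ k * (r * n)) * B := by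
  have hB : 0 ≤ B := (abs_nonneg _).trans (hC 0 (Nat.zero_le _))
  have hsum : |∑ j ∈ range (r * n + 1), Cnj k q r n (q * j)| ≤ ((r * n + 1 : ℕ) : ℝ) * B :=
    abs_sum_le_of_abs_le hB (card_range _).le fun j hj => hC _ (by
      have := mem_range.1 hj
      nlinarith)
  have hhalf : |(if Even q then (1 : ℝ) else 0) * (2 ^ k - 1) * rhoA k q r n (q / 2)| ≤
      2 ^ k * (r * n * B) := by
    rw [abs_mul, abs_mul]
    have h₁ : |(if Even q then (1 : ℝ) else 0)| ≤ 1 := by split_ifs <;> simp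
    have h₂ : |(2 : ℝ) ^ k - 1| ≤ 2 ^ k := by
      rw [abs_of_nonneg (by linarith [one_le_pow₀ (M₀ := ℝ) one_le_two (n := k)])]
      linarith
    simpa using mul_le_mul (mul_le_mul h₁ h₂ (abs_nonneg _) zero_le_one)
      (abs_rhoA_le hq hC (Nat.div_lt_self hq one_lt_two)) (abs_nonneg _) (by positivity)
  rw [rho1]
  push_cast at hsum
  calc _ ≤ _ := abs_add_le _ _
    _ ≤ 1 * ((r * n + 1) * B) + 2 ^ k * (r * n * B) := by
        rw [abs_mul]
        gcongr
        exact abs_neg_one_pow_div_le hq (k - 1)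
    _ = _ := by ring

lemma abs_rho0_le (hq : 0 < q) (hC : ∀ j ≤ r * q * n, |Cnj k q r n j| ≤ B) :
    |rho0 k q r n| ≤ (1 + q ^ (k + 1)) * (r * n) ^ 2 * B := by
  have hB : 0 ≤ B := (abs_nonneg _).trans (hC 0 (Nat.zero_le _))
  have hq' : (0 : ℝ) < q := by exact_mod_cast hq
  have hfirst : |∑ j ∈ Icc 1 (r * n), ∑ m ∈ Icc 1 j, Cnj k q r n (q * j) / (m : ℝ) ^ k| ≤
      ((r * n : ℕ) : ℝ) * (((r * n : ℕ) : ℝ) * B) := by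
    refine abs_sum_le_of_abs_le (by positivity) (by simp) fun j hj => ?_
    have hj := mem_Icc.1 hj
    refine abs_sum_le_of_abs_le hB (by simpa using hj.2) fun m hm => ?_
    have hm : (1 : ℝ) ≤ m := by exact_mod_cast (mem_Icc.1 hm).1
    rw [abs_div, abs_of_pos (by positivity : (0 : ℝ) < (m : ℝ) ^ k)]
    exact (div_le_self (abs_nonneg _) (one_le_pow₀ hm)).trans (hC _ (by nlinarith))
  have hsecond : |∑ a ∈ Icc 1 (q - 1), ∑ j ∈ range (r * n), ∑ m ∈ range (j + 1),
      Cnj k q r n (q * j + a) / ((m : ℝ) + (a : ℝ) / q) ^ k| ≤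
      (q : ℝ) * (((r * n : ℕ) : ℝ) * (((r * n : ℕ) : ℝ) * (q ^ k * B))) := by
    refine abs_sum_le_of_abs_le (by positivity) (by simp) fun a ha => ?_
    have ha := mem_Icc.1 ha
    have haq : a < q := by omega
    refine abs_sum_le_of_abs_le (by positivity) (card_range _).le fun j hj => ?_
    have hj := mem_range.1 hj
    refine abs_sum_le_of_abs_le (by positivity) (by simpa using hj) fun m _ => ?_
    have hden : (1 / q : ℝ) ^ k ≤ ((m : ℝ) + (a : ℝ) / q) ^ k := by
      have : (1 : ℝ) ≤ a := by exact_mod_cast ha.1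
      gcongr
      linarith [div_le_div_of_nonneg_right this hq'.le, m.cast_nonneg (α := ℝ)]
    rw [abs_div, abs_of_pos ((by positivity : (0 : ℝ) < (1 / q) ^ k).trans_le hden)]
    calc _ ≤ |Cnj k q r n (q * j + a)| / (1 / q : ℝ) ^ k :=
          div_le_div_of_nonneg_left (abs_nonneg _) (by positivity) hden
      _ = q ^ k * |Cnj k q r n (q * j + a)| := by rw [one_div, inv_pow, div_inv_eq_mul, mul_comm]
      _ ≤ q ^ k * B := by gcongr; exact hC _ (by nlinarith)
  rw [rho0, abs_mul]
  push_cast at hfirst hsecond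
  calc _ ≤ 1 * ((r * n) * (r * n * B) + q * (r * n * (r * n * (q ^ k * B)))) :=
        mul_le_mul (abs_neg_one_pow_div_le hq k)
          ((abs_add_le _ _).trans (add_le_add hfirst hsecond))
          (abs_nonneg _) zero_le_one
    _ = _ := by ring

lemma abs_rho_le (hq : 0 < q) (hC : ∀ j ≤ r * q * n, |Cnj k q r n j| ≤ B) :
    |rho0 k q r n| ≤ (1 + q ^ (k + 1)) * 2 ^ k * (r * n + 1) ^ 2 * B ∧
    |rho1 k q r n| ≤ (1 + q ^ (k + 1)) * 2 ^ k * (r * n + 1) ^ 2 * B ∧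
    ∀ a < q, |rhoA k q r n a| ≤ (1 + q ^ (k + 1)) * 2 ^ k * (r * n + 1) ^ 2 * B := by
  have hB : 0 ≤ B := (abs_nonneg _).trans (hC 0 (Nat.zero_le _))
  set x : ℝ := r * n
  have hx : 0 ≤ x := by positivity
  have h2k : (1 : ℝ) ≤ 2 ^ k := one_le_pow₀ one_le_two
  have hqk : (1 : ℝ) ≤ q ^ (k + 1) := one_le_pow₀ (by exact_mod_cast hq)
  have hsq : x + 1 ≤ (x + 1) ^ 2 := by nlinarith
  have hcoef₁ : x + 1 + 2 ^ k * x ≤ (1 + q ^ (k + 1)) * 2 ^ k * (x + 1) ^ 2 := by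
    nlinarith [mul_le_mul hqk hsq (by positivity) (by positivity)]
  refine ⟨(abs_rho0_le hq hC).trans ?_, (abs_rho1_le hq hC).trans ?_, fun a ha =>
    (abs_rhoA_le hq hC ha).trans ?_⟩ <;> refine mul_le_mul_of_nonneg_right ?_ hB
  · nlinarith [mul_le_mul hqk hsq (by positivity) (by positivity)]
  · exact hcoef₁
  · nlinarith

end RhoBounds

lemma mul_cnjBound_le_pow_mul_exp {k q r n : ℕ} (hn : 1 ≤ n) :
    (1 + q ^ (k + 1)) * 2 ^ k * (r * n + 1) ^ 2 * cnjBound k q r n ≤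
      (1 + q ^ (k + 1)) * 2 ^ k * (r + 1) ^ 2 * (r * q + 1) * (2 * q + r + 1) ^ k *
        (n : ℝ) ^ (k + 3) * Real.exp (betaConst k q r * n) := by
  have hn' : (1 : ℝ) ≤ n := by exact_mod_cast hn
  have hlin : ∀ c : ℝ, 0 ≤ c → c * n + 1 ≤ (c + 1) * n := fun c _ => by nlinarith
  have h₁ := hlin r (by positivity)
  have h₂ := hlin (r * q) (by positivity)
  have h₃ := hlin (2 * q + r) (by positivity)
  rw [cnjBound]
  calc _ = (1 + q ^ (k + 1)) * 2 ^ k * ((r * n + 1) ^ 2 * ((r * q) * n + 1) *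
        ((2 * q + r) * n + 1 : ℝ) ^ k) * Real.exp (betaConst k q r * n) := by ring
    _ ≤ (1 + q ^ (k + 1)) * 2 ^ k * (((r + 1) * n) ^ 2 * ((r * q + 1) * n) *
        ((2 * q + r + 1) * n : ℝ) ^ k) * Real.exp (betaConst k q r * n) := by gcongr
    _ = _ := by rw [mul_pow _ (n : ℝ) k]; ring

lemma eventually_const_mul_pow_le_exp (A : ℝ) (d : ℕ) {ε : ℝ} (hε : 0 < ε) :
    ∀ᶠ n : ℕ in atTop, A * (n : ℝ) ^ d ≤ Real.exp (ε * n) := by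
  have h := ((isLittleO_pow_exp_pos_mul_atTop d hε).const_mul_left A).bound one_pos
  filter_upwards [tendsto_natCast_atTop_atTop.eventually h] with n hn
  rw [one_mul, Real.norm_of_nonneg (Real.exp_pos _).le] at hn
  exact (le_abs_self _).trans hn

theorem stmt_4_general (k q r : ℕ) (hq : 3 ≤ q) (hr : 2 * k < r) :
    ∀ ε : ℝ, 0 < ε → ∃ N : ℕ, ∀ n : ℕ, N ≤ n → 0 < n → Nat.factorial q ∣ n →
      |rho0 k q r n| ≤ Real.exp ((betaConst k q r + ε) * n) ∧
      |rho1 k q r n| ≤ Real.exp ((betaConst k q r + ε) * n) ∧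
      ∀ a : ℕ, 1 ≤ a → 2 * a < q →
        |rhoA k q r n a| ≤ Real.exp ((betaConst k q r + ε) * n) := by
  intro ε hε
  obtain ⟨N, hN⟩ := eventually_atTop.1 (eventually_const_mul_pow_le_exp
    ((1 + q ^ (k + 1)) * 2 ^ k * (r + 1) ^ 2 * (r * q + 1) * (2 * q + r + 1) ^ k) (k + 3) hε)
  refine ⟨N, fun n hNn hn _ => ?_⟩
  have henv : (1 + q ^ (k + 1)) * 2 ^ k * (r * n + 1) ^ 2 * cnjBound k q r n ≤
      Real.exp ((betaConst k q r + ε) * n) := by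
    rw [show (betaConst k q r + ε) * n = betaConst k q r * n + ε * n by ring, Real.exp_add,
      mul_comm (Real.exp (betaConst k q r * n))]
    exact (mul_cnjBound_le_pow_mul_exp hn).trans (by gcongr; exact hN n hNn)
  have hC : ∀ j ≤ r * q * n, |Cnj k q r n j| ≤ cnjBound k q r n :=
    fun j hj => abs_Cnj_le (by omega) (by omega) hj
  obtain ⟨h₀, h₁, hA⟩ := abs_rho_le (by omega) hC
  exact ⟨h₀.trans henv, h₁.trans henv, fun a _ ha => (hA a (by omega)).trans henv⟩

theorem stmt_4 (k q r : ℕ) (hk : 2 ≤ k) (hq : 3 ≤ q) (hr : 2 * k < r) :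
    ∀ ε : ℝ, 0 < ε → ∃ N : ℕ, ∀ n : ℕ, N ≤ n → 0 < n → Nat.factorial q ∣ n →
      |rho0 k q r n| ≤ Real.exp ((betaConst k q r + ε) * n) ∧
      |rho1 k q r n| ≤ Real.exp ((betaConst k q r + ε) * n) ∧
      ∀ a : ℕ, 1 ≤ a → 2 * a < q →
        |rhoA k q r n a| ≤ Real.exp ((betaConst k q r + ε) * n) :=
  stmt_4_general k q r hq hr
end

section
/- Let k ≥ 2, q ≥ 3, and r > 2k be integers, and let n be a positive integer divisible by q!. Then for every j with 0 ≤ j ≤ rqn, the rational number C_{n,j} is an integer. -/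
open Finset

/-!
Up to the sign `(-1)^j` and the integer `binom(rqn, j) (rqn - 2j)^{1-δ_k}`, the number
`(qn)!^{2k} C_{n,j}` is `(±E·A)^k (E·B)^k`, where `E = ∏_{p ∣ q} p^{qn/(p-1)}`,
`A = ∏_{i<qn} (j + q + qi)` and `B = ∏_{i<qn} (rqn + q - j + qi)`: when `qx` is an integer,
`q^{qn} (x)_{qn}` is a product over an arithmetic progression of difference `q`. So it suffices
that `(qn)!` divides `E` times any such product. For a prime `p ∤ q`, `q` is invertible modulo
`p^t`, so the progression is congruent modulo `p^t` to `q^{qn}` times `qn` consecutive integers,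
whose product is divisible by `(qn)!`. For `p ∣ q`, Legendre's formula gives
`v_p((qn)!) ≤ qn/(p-1)`, which `E` supplies.
-/

open Nat

theorem dvd_prod_range_add_mul_of_coprime {d m : ℕ} (c q : ℕ) (hd : d ∣ m !)
    (hqd : q.Coprime d) :
    d ∣ ∏ i ∈ range m, (c + q * i) := by
  set u := (q⁻¹ : ZMod d).val * c
  have hu : d ∣ ∏ i ∈ range m, (u + i) :=
    hd.trans (ascFactorial_eq_prod_range u m ▸ factorial_dvd_ascFactorial u m)
  have hqu : (q * u : ZMod d) = c := by
    simp only [u, Nat.cast_mul, ← mul_assoc, ZMod.mul_val_inv hqd, one_mul]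
  rw [← ZMod.natCast_eq_zero_iff] at hu ⊢
  push_cast at hu ⊢
  calc ∏ i ∈ range m, ((c : ZMod d) + q * i) = ∏ i ∈ range m, (q * (u + i) : ZMod d) := by
        simp only [mul_add, hqu]
    _ = 0 := by rw [← pow_card_mul_prod, hu, mul_zero]

theorem le_div_sub_one_of_pow_dvd_factorial {p k m : ℕ} (hp : p.Prime) (h : p ^ k ∣ m !) :
    k ≤ m / (p - 1) := by
  have := Fact.mk hp
  rw [padicValNat_dvd_iff_le (factorial_ne_zero m)] at h
  rw [Nat.le_div_iff_mul_le (by have := hp.two_le; omega)]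
  calc k * (p - 1) ≤ padicValNat p m ! * (p - 1) := Nat.mul_le_mul_right _ h
    _ = m - (p.digits m).sum := by rw [mul_comm, sub_one_mul_padicValNat_factorial]
    _ ≤ m := Nat.sub_le _ _

def legendreFactor (q m : ℕ) : ℕ := ∏ p ∈ q.primeFactors, p ^ (m / (p - 1))

theorem factorial_dvd_legendreFactor_mul_prod_range {q : ℕ} (hq : q ≠ 0) (m c : ℕ) :
    m ! ∣ legendreFactor q m * ∏ i ∈ range m, (c + q * i) := by
  refine (Nat.dvd_iff_prime_pow_dvd_dvd _ _).2 fun p k hp hpk => ?_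
  by_cases hpq : p ∣ q
  · refine dvd_mul_of_dvd_left
      ((pow_dvd_pow p (le_div_sub_one_of_pow_dvd_factorial hp hpk)).trans ?_) _
    exact dvd_prod_of_mem _ (mem_primeFactors.2 ⟨hp, hpq, hq⟩)
  · exact dvd_mul_of_dvd_right (dvd_prod_range_add_mul_of_coprime c q hpk
      (Nat.Coprime.pow_right k ((hp.coprime_iff_not_dvd.2 hpq).symm))) _

theorem poch_neg_sub (x : ℝ) (m : ℕ) : poch (-x - m) m = (-1) ^ m * poch (x + 1) m := by
  rw [poch, poch, ← prod_range_reflect, show (-1 : ℝ) ^ m = ∏ _i ∈ range m, -1 by simp,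
    ← prod_mul_distrib]
  refine prod_congr rfl fun i hi => ?_
  have hi := mem_range.1 hi
  rw [Nat.cast_sub (by omega), Nat.cast_sub (by omega)]
  push_cast
  ring

theorem pow_mul_poch_div (a : ℝ) {q : ℝ} (hq : q ≠ 0) (m : ℕ) :
    q ^ m * poch (a / q) m = ∏ i ∈ range m, (a + q * i) := by
  rw [poch, show q ^ m = ∏ _i ∈ range m, q by simp, ← prod_mul_distrib]
  refine prod_congr rfl fun i _ => ?_
  field_simp

theorem natCast_prod_add_mul_eq_poch_sub {q n : ℕ} (hq : q ≠ 0) (j : ℕ) :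
    (-1) ^ (q * n) * ((∏ i ∈ range (q * n), (j + q + q * i) : ℕ) : ℝ) =
      (q : ℝ) ^ (q * n) * poch (-(j : ℝ) / q - q * n) (q * n) := by
  have hqR : (q : ℝ) ≠ 0 := Nat.cast_ne_zero.2 hq
  rw [show -(j : ℝ) / q - q * n = -(j / q) - ((q * n : ℕ) : ℝ) by push_cast; ring,
    poch_neg_sub, mul_left_comm, show (j : ℝ) / q + 1 = (j + q) / q by field_simp,
    pow_mul_poch_div _ hqR]
  push_cast
  rfl

theorem natCast_prod_add_mul_eq_poch_add {q r n j : ℕ} (hq : q ≠ 0) (hj : j ≤ r * q * n) :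
    ((∏ i ∈ range (q * n), (r * q * n + q - j + q * i) : ℕ) : ℝ) =
      (q : ℝ) ^ (q * n) * poch (-(j : ℝ) / q + r * n + 1) (q * n) := by
  have hqR : (q : ℝ) ≠ 0 := Nat.cast_ne_zero.2 hq
  rw [show -(j : ℝ) / q + r * n + 1 = ((r * q * n + q - j : ℕ) : ℝ) / q by
    rw [Nat.cast_sub (by omega)]; push_cast; field_simp; ring, pow_mul_poch_div _ hqR]
  push_cast
  rfl

theorem prod_primeFactors_pow_eq_legendreFactor_pow {q m : ℕ}
    (hpred : ∀ p ∈ q.primeFactors, p - 1 ∣ m) (k : ℕ) :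
    ∏ p ∈ q.primeFactors, (p : ℝ) ^ (k * m / (p - 1)) = (legendreFactor q m : ℝ) ^ k := by
  rw [legendreFactor, Nat.cast_prod, ← prod_pow]
  refine prod_congr rfl fun p hp => ?_
  rw [Nat.mul_div_assoc _ (hpred p hp), mul_comm, pow_mul]
  push_cast
  rfl

theorem factorial_pow_mul_Cnj {k q r n j : ℕ} (hq : q ≠ 0) (hj : j ≤ r * q * n)
    (hpred : ∀ p ∈ q.primeFactors, p - 1 ∣ q * n) :
    ((q * n)! : ℝ) ^ (2 * k) * Cnj k q r n j =
      (-1) ^ j * (r * q * n).choose j * ((r * q * n : ℝ) - 2 * j) ^ (1 - k % 2) *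
        ((-1) ^ (q * n) *
          (legendreFactor q (q * n) * ∏ i ∈ range (q * n), (j + q + q * i) : ℕ)) ^ k *
        ((legendreFactor q (q * n) *
          ∏ i ∈ range (q * n), (r * q * n + q - j + q * i) : ℕ) : ℝ) ^ k := by
  have hden : ((q * n)! : ℝ) ^ (2 * k) ≠ 0 :=
    pow_ne_zero _ (Nat.cast_ne_zero.2 (factorial_ne_zero _))
  rw [Cnj, mul_div_cancel₀ _ hden, show 2 * k * q * n = 2 * k * (q * n) by ring,
    prod_primeFactors_pow_eq_legendreFactor_pow hpred, Nat.cast_mul, Nat.cast_mul,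
    mul_left_comm ((-1 : ℝ) ^ (q * n)), natCast_prod_add_mul_eq_poch_sub hq,
    natCast_prod_add_mul_eq_poch_add hq hj]
  ring

theorem stmt_5_general (k q r n : ℕ) (hq : 3 ≤ q) (hfac : Nat.factorial q ∣ n) :
    ∀ j : ℕ, j ≤ r * q * n → ∃ z : ℤ, Cnj k q r n j = (z : ℝ) := by
  intro j hj
  have hq0 : q ≠ 0 := by omega
  have hpred : ∀ p ∈ q.primeFactors, p - 1 ∣ q * n := fun p hp =>
    ((Nat.dvd_factorial (Nat.sub_pos_of_lt (prime_of_mem_primeFactors hp).one_lt)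
      ((Nat.sub_le p 1).trans (le_of_mem_primeFactors hp))).trans hfac).mul_left q
  obtain ⟨a, ha⟩ := factorial_dvd_legendreFactor_mul_prod_range hq0 (q * n) (j + q)
  obtain ⟨b, hb⟩ := factorial_dvd_legendreFactor_mul_prod_range hq0 (q * n) (r * q * n + q - j)
  refine ⟨(-1) ^ j * (r * q * n).choose j * ((r * q * n : ℤ) - 2 * j) ^ (1 - k % 2) *
    ((-1) ^ (q * n) * a) ^ k * b ^ k, ?_⟩
  have hden : ((q * n)! : ℝ) ^ (2 * k) ≠ 0 :=
    pow_ne_zero _ (Nat.cast_ne_zero.2 (factorial_ne_zero _))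
  refine mul_left_cancel₀ hden ?_
  rw [factorial_pow_mul_Cnj hq0 hj hpred, ha, hb]
  push_cast
  ring

theorem stmt_5 (k q r n : ℕ) (hk : 2 ≤ k) (hq : 3 ≤ q) (hr : 2 * k < r)
    (hn : 0 < n) (hfac : Nat.factorial q ∣ n) :
    ∀ j : ℕ, j ≤ r * q * n → ∃ z : ℤ, Cnj k q r n j = (z : ℝ) :=
  stmt_5_general k q r n hq hfac
end

section
/- Let k ≥ 2, q ≥ 3, and r > 2k be integers, and let n be a positive integer divisible by q! (in particular n is even). Then C_{n,j} = (−1)^{k−1} C_{n, rqn−j} for every j with 0 ≤ j ≤ rqn. -/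
open Finset

lemma poch_eq_neg_one_pow_mul_poch (x : ℝ) (m : ℕ) :
    poch x m = (-1 : ℝ) ^ m * poch (-x - m + 1) m := by
  unfold poch
  rw [← prod_range_reflect, pow_eq_prod_const, ← prod_mul_distrib]
  refine prod_congr rfl fun i hi => ?_
  rw [Nat.sub_sub, Nat.cast_sub (by rw [mem_range] at hi; omega)]
  push_cast
  ring

lemma poch_eq_poch_of_even {m : ℕ} (hm : Even m) (x : ℝ) :
    poch x m = poch (-x - m + 1) m := by
  rw [poch_eq_neg_one_pow_mul_poch, hm.neg_one_pow, one_mul]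

lemma neg_one_pow_sub_of_even {R : Type*} [Ring R] {N j : ℕ}
    (hN : Even N) (hj : j ≤ N) : (-1 : R) ^ (N - j) = (-1) ^ j := by
  rw [neg_one_pow_eq_pow_mod_two, neg_one_pow_eq_pow_mod_two (n := j)]
  congr 1
  obtain ⟨t, rfl⟩ := hN
  omega

lemma neg_one_pow_one_sub_mod_two {R : Type*} [Ring R] {k : ℕ}
    (hk : 1 ≤ k) : (-1 : R) ^ (1 - k % 2) = (-1) ^ (k - 1) := by
  rw [neg_one_pow_eq_pow_mod_two (k - 1)]
  congr 1
  omega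

lemma Cnj_sub_eq_neg_one_pow_mul {k q r n j : ℕ} (hq : q ≠ 0) (hn : Even n)
    (hj : j ≤ r * q * n) :
    Cnj k q r n (r * q * n - j) = (-1 : ℝ) ^ (1 - k % 2) * Cnj k q r n j := by
  have hqn : Even (q * n) := hn.mul_left q
  have hcast : ((r * q * n - j : ℕ) : ℝ) = r * q * n - j := by push_cast [hj]; ring
  have hq' : (q : ℝ) ≠ 0 := by exact_mod_cast hq
  have hx : poch (-((r * q * n - j : ℕ) : ℝ) / q - q * n) (q * n)
      = poch (-(j : ℝ) / q + r * n + 1) (q * n) := by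
    rw [poch_eq_poch_of_even hqn, hcast]
    congr 1
    push_cast
    field_simp
    ring
  have hy : poch (-((r * q * n - j : ℕ) : ℝ) / q + r * n + 1) (q * n)
      = poch (-(j : ℝ) / q - q * n) (q * n) := by
    rw [poch_eq_poch_of_even hqn, hcast]
    congr 1
    push_cast
    field_simp
    ring
  have hsign : ((r * q * n : ℝ) - 2 * ((r * q * n - j : ℕ) : ℝ)) ^ (1 - k % 2)
      = (-1) ^ (1 - k % 2) * ((r * q * n : ℝ) - 2 * j) ^ (1 - k % 2) := by
    rw [hcast, ← neg_pow]
    ring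
  simp only [Cnj, neg_one_pow_sub_of_even (hn.mul_left (r * q)) hj, Nat.choose_symm hj, hx,
    hy, hsign]
  ring

theorem stmt_6_general (k q r n : ℕ) (hk : 2 ≤ k) (hq : 3 ≤ q)
    (hfac : Nat.factorial q ∣ n) :
    ∀ j : ℕ, j ≤ r * q * n →
      Cnj k q r n j = (-1 : ℝ) ^ (k - 1) * Cnj k q r n (r * q * n - j) := by
  intro j hj
  have hn : Even n := even_iff_two_dvd.mpr ((Nat.dvd_factorial two_pos (by omega)).trans hfac)
  rw [Cnj_sub_eq_neg_one_pow_mul (by omega) hn hj, neg_one_pow_one_sub_mod_two (by omega),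
    ← mul_assoc, ← pow_add, Even.neg_one_pow ⟨_, rfl⟩, one_mul]

theorem stmt_6 (k q r n : ℕ) (hk : 2 ≤ k) (hq : 3 ≤ q) (hr : 2 * k < r)
    (hn : 0 < n) (hfac : Nat.factorial q ∣ n) :
    ∀ j : ℕ, j ≤ r * q * n →
      Cnj k q r n j = (-1 : ℝ) ^ (k - 1) * Cnj k q r n (r * q * n - j) :=
  stmt_6_general k q r n hk hq hfac
end

section
/- Let k ≥ 2 and q' ≥ 2 be integers, let p be a prime number, and set q = p·q'. Then V_k⁻(q') ⊆ V_k⁻(q) and V_k⁺(q') ⊆ V_k⁺(q). -/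
/-!
The distribution relation `∑_{j<p} ζ(k, (x+j)/p) = p^k ζ(k, x)`, taken at `x = a/q'` and
symmetrised under `x ↦ 1 - x`, writes `p^k ζ^±(k, a/q')` as the sum of the `ζ^±(k, c/(pq'))` over
`c < pq'` with `c ≡ a mod q'`. Those `c` prime to `p` give generators of level `pq'`; at most one
`c = pb` is divisible by `p`, and it contributes `ζ^±(k, b/q')`. So modulo the level-`pq'` span,
`v_a := ζ^±(k, a/q')` satisfies `p^k v_a ≡ v_{σ a}` for a self-map `σ` of the residues prime to
`q'`. Iterating and taking `σ^m a = σ^n a` with `m < n` gives `(p^{km} - p^{kn}) v_a ≡ 0`, hence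
`v_a ≡ 0`. Finally `ζ^±(k, 1 - x) = ±ζ^±(k, x)`, so the span over all residues equals the span
over `a < q/2`.
-/

open Finset

/-- The Hurwitz zeta value `ζ(k, x) = ∑_{m ≥ 0} 1/(m+x)^k`. -/
noncomputable def hzeta (k : ℕ) (x : ℝ) : ℝ := ∑' m : ℕ, 1 / ((m : ℝ) + x) ^ k

/-- The odd part `ζ⁻(k, a/q) = ζ(k, a/q) − (−1)^k ζ(k, 1 − a/q)`. -/
noncomputable def zetaMinus (k a q : ℕ) : ℝ :=
  hzeta k ((a : ℝ) / q) - (-1 : ℝ) ^ k * hzeta k (1 - (a : ℝ) / q)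

/-- The even part `ζ⁺(k, a/q) = ζ(k, a/q) + (−1)^k ζ(k, 1 − a/q)`. -/
noncomputable def zetaPlus (k a q : ℕ) : ℝ :=
  hzeta k ((a : ℝ) / q) + (-1 : ℝ) ^ k * hzeta k (1 - (a : ℝ) / q)

/-- `V_k⁻(q)` for `q ≥ 3`; for `q = 2` it is defined as `ℚ · ζ⁻(k, 1/2)`. -/
noncomputable def Vminus (k q : ℕ) : Submodule ℚ ℝ :=
  if q = 2 then Submodule.span ℚ {zetaMinus k 1 2}
  else Submodule.span ℚ
    {x : ℝ | ∃ a : ℕ, 1 ≤ a ∧ 2 * a < q ∧ Nat.gcd a q = 1 ∧ x = zetaMinus k a q}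

/-- `V_k⁺(q)` for `q ≥ 3`; for `q = 2` it is defined as `ℚ · ζ⁺(k, 1/2)`. -/
noncomputable def Vplus (k q : ℕ) : Submodule ℚ ℝ :=
  if q = 2 then Submodule.span ℚ {zetaPlus k 1 2}
  else Submodule.span ℚ
    {x : ℝ | ∃ a : ℕ, 1 ≤ a ∧ 2 * a < q ∧ Nat.gcd a q = 1 ∧ x = zetaPlus k a q}

/-- `V_k(q)`, the ℚ-span of `ζ(k, a/q)` for `1 ≤ a < q` coprime to `q`
(for `q = 2` this gives `ℚ · ζ(k, 1/2)` as well). -/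
noncomputable def Vfull (k q : ℕ) : Submodule ℚ ℝ :=
  Submodule.span ℚ
    {x : ℝ | ∃ a : ℕ, 1 ≤ a ∧ a < q ∧ Nat.gcd a q = 1 ∧ x = hzeta k ((a : ℝ) / q)}

lemma summable_one_div_nat_add_pow {k : ℕ} (hk : 2 ≤ k) {x : ℝ} (hx : 0 < x) :
    Summable fun n : ℕ => 1 / ((n : ℝ) + x) ^ k := by
  refine ((Real.summable_one_div_nat_add_rpow x k).mpr (by exact_mod_cast hk)).congr fun n => ?_
  rw [abs_of_pos (by positivity), Real.rpow_natCast]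

lemma tsum_eq_sum_range_tsum_add_mul {f : ℕ → ℝ} (hf : Summable f) (p : ℕ) [NeZero p] :
    ∑' n, f n = ∑ j ∈ range p, ∑' m, f (j + p * m) := by
  rw [Nat.sumByResidueClasses hf p, Finset.sum_range]
  refine Fintype.sum_equiv (ZMod.finEquiv p).toEquiv.symm _ _ fun j => ?_
  obtain ⟨n, rfl⟩ := Nat.exists_eq_succ_of_ne_zero (NeZero.ne p)
  rfl

lemma sum_range_hzeta_add_div {k : ℕ} (hk : 2 ≤ k) {p : ℕ} (hp : 0 < p) {x : ℝ} (hx : 0 < x) :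
    ∑ j ∈ range p, hzeta k ((x + j) / p) = (p : ℝ) ^ k * hzeta k x := by
  have : NeZero p := ⟨hp.ne'⟩
  rw [hzeta, tsum_eq_sum_range_tsum_add_mul (summable_one_div_nat_add_pow hk hx) p, mul_sum]
  refine sum_congr rfl fun j _ => ?_
  rw [hzeta, ← tsum_mul_left]
  refine tsum_congr fun m => ?_
  have hp' : (p : ℝ) ≠ 0 := by exact_mod_cast hp.ne'
  have hshift : (m : ℝ) + (x + j) / p = (j + p * m + x) / p := by field_simp; ring
  push_cast
  rw [hshift, div_pow, one_div_div, mul_one_div]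

noncomputable def hzetaSym (s : ℝ) (k : ℕ) (x : ℝ) : ℝ := hzeta k x + s * hzeta k (1 - x)

lemma hzetaSym_one_sub {s : ℝ} (hs : s * s = 1) (k : ℕ) (x : ℝ) :
    hzetaSym s k (1 - x) = s * hzetaSym s k x := by
  rw [hzetaSym, hzetaSym, sub_sub_cancel]
  linear_combination (-hzeta k (1 - x)) * hs

lemma sum_range_hzetaSym_add_div (s : ℝ) {k : ℕ} (hk : 2 ≤ k) {p : ℕ} (hp : 0 < p) {x : ℝ}
    (hx₀ : 0 < x) (hx₁ : x < 1) :
    ∑ j ∈ range p, hzetaSym s k ((x + j) / p) = (p : ℝ) ^ k * hzetaSym s k x := by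
  have hreflect : ∑ j ∈ range p, hzeta k (1 - (x + j) / p)
      = ∑ j ∈ range p, hzeta k ((1 - x + j) / p) := by
    rw [← sum_range_reflect]
    refine sum_congr rfl fun j hj => ?_
    have hp' : (p : ℝ) ≠ 0 := by exact_mod_cast hp.ne'
    rw [Nat.cast_sub (by simp at hj; omega), Nat.cast_sub (by omega)]
    congr 1
    field_simp
    ring
  simp only [hzetaSym, sum_add_distrib, ← mul_sum, hreflect, sum_range_hzeta_add_div hk hp hx₀,
    sum_range_hzeta_add_div hk hp (sub_pos.2 hx₁)]
  ring

lemma Submodule.mem_of_forall_exists_smul_sub_mem {K M ι : Type*} [Field K] [AddCommGroup M]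
    [Module K M] {W : Submodule K M} {r : K} (hr : Function.Injective (r ^ · : ℕ → K))
    {s : Set ι} (hs : s.Finite) {g : ι → M} (h : ∀ i ∈ s, ∃ j ∈ s, r • g i - g j ∈ W)
    {i : ι} (hi : i ∈ s) : g i ∈ W := by
  choose! σ hσs hσW using h
  have hiter : ∀ n, σ^[n] i ∈ s ∧ r ^ n • g i - g (σ^[n] i) ∈ W := by
    intro n
    induction n with
    | zero => simpa using hi
    | succ n ih =>
      rw [Function.iterate_succ_apply']
      refine ⟨hσs _ ih.1, ?_⟩
      have hstep := W.add_mem (W.smul_mem r ih.2) (hσW _ ih.1)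
      rwa [smul_sub, smul_smul, ← pow_succ', sub_add_sub_cancel] at hstep
  obtain ⟨m, n, hmn, hcycle⟩ := hs.exists_lt_map_eq_of_forall_mem fun n => (hiter n).1
  have hdiff := W.sub_mem (hiter m).2 (hiter n).2
  rw [hcycle, sub_sub_sub_cancel_right, ← sub_smul] at hdiff
  exact (W.smul_mem_iff (sub_ne_zero.2 (hr.ne hmn.ne))).1 hdiff

noncomputable def symSpan (s : ℝ) (k q : ℕ) : Submodule ℚ ℝ :=
  Submodule.span ℚ
    {y : ℝ | ∃ a : ℕ, 1 ≤ a ∧ a < q ∧ Nat.gcd a q = 1 ∧ y = hzetaSym s k ((a : ℝ) / q)}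

noncomputable def halfSymSpan (s : ℝ) (k q : ℕ) : Submodule ℚ ℝ :=
  Submodule.span ℚ
    {y : ℝ | ∃ a : ℕ, 1 ≤ a ∧ 2 * a < q ∧ Nat.gcd a q = 1 ∧ y = hzetaSym s k ((a : ℝ) / q)}

lemma symSpan_le_halfSymSpan {s : ℝ} (hs : s * s = 1) (k : ℕ) {q : ℕ} (hq : q ≠ 2) :
    symSpan s k q ≤ halfSymSpan s k q := by
  rw [symSpan, Submodule.span_le]
  rintro _ ⟨a, ha₁, haq, hcop, rfl⟩
  rcases lt_trichotomy (2 * a) q with hlt | heq | hgt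
  · exact Submodule.subset_span ⟨a, ha₁, hlt, hcop, rfl⟩
  · rw [Nat.gcd_eq_left ⟨2, by omega⟩] at hcop
    omega
  · have hcop' : Nat.gcd (q - a) q = 1 := by
      rwa [Nat.gcd_comm, Nat.gcd_self_sub_right haq.le, Nat.gcd_comm]
    have hq : (q : ℝ) ≠ 0 := by exact_mod_cast (by omega : q ≠ 0)
    have hrefl : hzetaSym s k ((a : ℝ) / q) = s * hzetaSym s k ((q - a : ℕ) / q) := by
      rw [← hzetaSym_one_sub hs, Nat.cast_sub haq.le]
      congr 1
      field_simp
      ring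
    have hmem : hzetaSym s k ((q - a : ℕ) / q) ∈ halfSymSpan s k q :=
      Submodule.subset_span ⟨q - a, by omega, by omega, hcop', rfl⟩
    rcases mul_self_eq_one_iff.1 hs with rfl | rfl
    · simpa [hrefl] using hmem
    · simpa [hrefl] using hmem

lemma add_mul_lt_mul_of_lt {a q j p : ℕ} (haq : a < q) (hj : j < p) : a + j * q < p * q :=
  calc a + j * q < (j + 1) * q := by linarith
    _ ≤ p * q := Nat.mul_le_mul_right q hj

lemma eq_of_dvd_add_mul_of_dvd_add_mul {p q a j j' : ℕ} (hpq : p.Coprime q) (hj : j < p)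
    (hj' : j' < p) (h : p ∣ a + j * q) (h' : p ∣ a + j' * q) : j = j' := by
  have hmod : j * q ≡ j' * q [MOD p] := Nat.ModEq.add_left_cancel' a
    ((Nat.modEq_zero_iff_dvd.2 h).trans (Nat.modEq_zero_iff_dvd.2 h').symm)
  have hjj' := Nat.ModEq.cancel_right_of_coprime hpq hmod
  rwa [Nat.ModEq, Nat.mod_eq_of_lt hj, Nat.mod_eq_of_lt hj'] at hjj'

lemma pow_mul_hzetaSym_eq_sum (s : ℝ) {k : ℕ} (hk : 2 ≤ k) {p : ℕ} (hp : 0 < p) {a q : ℕ}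
    (ha : 1 ≤ a) (haq : a < q) :
    (p : ℝ) ^ k * hzetaSym s k ((a : ℝ) / q)
      = ∑ j ∈ range p, hzetaSym s k (((a + j * q : ℕ) : ℝ) / (p * q : ℕ)) := by
  have hq : (0 : ℝ) < q := by exact_mod_cast (by omega : 0 < q)
  have hlt : (a : ℝ) / q < 1 := (div_lt_one hq).2 (by exact_mod_cast haq)
  rw [← sum_range_hzetaSym_add_div s hk hp (by positivity) hlt]
  refine sum_congr rfl fun j _ => ?_
  congr 1
  push_cast
  field_simp

lemma hzetaSym_mem_symSpan_mul {s : ℝ} {k p q a j : ℕ} (hp : p.Prime) (ha : 1 ≤ a) (haq : a < q)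
    (hcop : Nat.gcd a q = 1) (hj : j < p) (hpj : ¬ p ∣ a + j * q) :
    hzetaSym s k (((a + j * q : ℕ) : ℝ) / (p * q : ℕ)) ∈ symSpan s k (p * q) := by
  refine Submodule.subset_span ⟨a + j * q, by omega, add_mul_lt_mul_of_lt haq hj, ?_, rfl⟩
  exact Nat.Coprime.mul_right ((hp.coprime_iff_not_dvd.2 hpj).symm)
    ((Nat.coprime_add_mul_right_left a q j).2 hcop)

lemma exists_pow_smul_sub_mem_symSpan_mul (s : ℝ) {k p q a : ℕ} (hk : 2 ≤ k) (hp : p.Prime)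
    (ha : 1 ≤ a) (haq : a < q) (hcop : Nat.gcd a q = 1) :
    ∃ b, (1 ≤ b ∧ b < q ∧ Nat.gcd b q = 1) ∧
      ((p : ℚ) ^ k) • hzetaSym s k ((a : ℝ) / q) - hzetaSym s k ((b : ℝ) / q)
        ∈ symSpan s k (p * q) := by
  have hsum := pow_mul_hzetaSym_eq_sum s hk hp.pos ha haq
  rw [← Rat.cast_natCast, ← Rat.cast_pow, ← Rat.smul_def] at hsum
  by_cases hdvd : ∃ j < p, p ∣ a + j * q
  · obtain ⟨j₀, hj₀, b, hb⟩ := hdvd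
    have hpq : p.Coprime q := by
      refine hp.coprime_iff_not_dvd.2 fun hpq => hp.one_lt.ne' (Nat.eq_one_of_dvd_one ?_)
      rw [← hcop]
      exact Nat.dvd_gcd ((Nat.dvd_add_left (dvd_mul_of_dvd_right hpq j₀)).1 ⟨b, hb⟩) hpq
    have hbq : p * b < p * q := hb ▸ add_mul_lt_mul_of_lt haq hj₀
    have hbcop : Nat.gcd b q = 1 :=
      Nat.Coprime.coprime_dvd_left ⟨p, by rw [hb, mul_comm]⟩
        ((Nat.coprime_add_mul_right_left a q j₀).2 hcop)
    have hb₀ : 1 ≤ b := Nat.pos_of_ne_zero fun hb₀ => by rw [hb₀, mul_zero] at hb; omega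
    refine ⟨b, ⟨hb₀, Nat.lt_of_mul_lt_mul_left hbq, hbcop⟩, ?_⟩
    have hcancel : ((p * b : ℕ) : ℝ) / (p * q : ℕ) = (b : ℝ) / q := by
      rw [Nat.cast_mul, Nat.cast_mul, mul_div_mul_left _ _ (by exact_mod_cast hp.ne_zero)]
    rw [hsum, ← add_sum_erase _ _ (mem_range.2 hj₀), hb, hcancel, add_sub_cancel_left]
    refine Submodule.sum_mem _ fun j hj => ?_
    obtain ⟨hjj₀, hj⟩ := mem_erase.1 hj
    have hpj : ¬ p ∣ a + j * q := fun hpj =>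
      hjj₀ (eq_of_dvd_add_mul_of_dvd_add_mul hpq (mem_range.1 hj) hj₀ hpj ⟨b, hb⟩)
    exact hzetaSym_mem_symSpan_mul hp ha haq hcop (mem_range.1 hj) hpj
  · push Not at hdvd
    have hmem : ((p : ℚ) ^ k) • hzetaSym s k ((a : ℝ) / q) ∈ symSpan s k (p * q) := by
      rw [hsum]
      exact Submodule.sum_mem _ fun j hj =>
        hzetaSym_mem_symSpan_mul hp ha haq hcop (mem_range.1 hj) (hdvd j (mem_range.1 hj))
    refine ⟨a, ⟨ha, haq, hcop⟩, Submodule.sub_mem _ hmem ?_⟩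
    exact (Submodule.smul_mem_iff _ (pow_ne_zero k (by exact_mod_cast hp.ne_zero))).1 hmem

theorem symSpan_le_symSpan_mul (s : ℝ) {k p : ℕ} (hk : 2 ≤ k) (hp : p.Prime) (q : ℕ) :
    symSpan s k q ≤ symSpan s k (p * q) := by
  have hr : Function.Injective (((p : ℚ) ^ k) ^ · : ℕ → ℚ) :=
    pow_right_injective₀ (pow_pos (by exact_mod_cast hp.pos) k)
      (one_lt_pow₀ (by exact_mod_cast hp.one_lt) (by omega)).ne'
  have hfin : {a : ℕ | 1 ≤ a ∧ a < q ∧ Nat.gcd a q = 1}.Finite :=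
    (Set.finite_lt_nat q).subset fun a ha => ha.2.1
  rw [symSpan, Submodule.span_le]
  rintro _ ⟨a, ha₁, haq, hcop, rfl⟩
  exact Submodule.mem_of_forall_exists_smul_sub_mem (g := fun a : ℕ => hzetaSym s k ((a : ℝ) / q))
    hr hfin (fun a ha => exists_pow_smul_sub_mem_symSpan_mul s hk hp ha.1 ha.2.1 ha.2.2)
    ⟨ha₁, haq, hcop⟩

lemma zetaMinus_eq_hzetaSym (k a q : ℕ) :
    zetaMinus k a q = hzetaSym (-(-1) ^ k) k ((a : ℝ) / q) := by
  rw [zetaMinus, hzetaSym]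
  ring

lemma zetaPlus_eq_hzetaSym (k a q : ℕ) :
    zetaPlus k a q = hzetaSym ((-1) ^ k) k ((a : ℝ) / q) := by
  rw [zetaPlus, hzetaSym]

lemma Vminus_le_symSpan (k q : ℕ) : Vminus k q ≤ symSpan (-(-1) ^ k) k q := by
  rw [Vminus]
  split_ifs with hq
  · subst hq
    rw [Submodule.span_le, Set.singleton_subset_iff, zetaMinus_eq_hzetaSym]
    exact Submodule.subset_span ⟨1, le_rfl, one_lt_two, Nat.gcd_one_left 2, rfl⟩
  · refine Submodule.span_mono ?_
    rintro _ ⟨a, ha, haq, hcop, rfl⟩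
    exact ⟨a, ha, by omega, hcop, zetaMinus_eq_hzetaSym k a q⟩

lemma Vplus_le_symSpan (k q : ℕ) : Vplus k q ≤ symSpan ((-1) ^ k) k q := by
  rw [Vplus]
  split_ifs with hq
  · subst hq
    rw [Submodule.span_le, Set.singleton_subset_iff, zetaPlus_eq_hzetaSym]
    exact Submodule.subset_span ⟨1, le_rfl, one_lt_two, Nat.gcd_one_left 2, rfl⟩
  · refine Submodule.span_mono ?_
    rintro _ ⟨a, ha, haq, hcop, rfl⟩
    exact ⟨a, ha, by omega, hcop, zetaPlus_eq_hzetaSym k a q⟩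

lemma halfSymSpan_eq_Vminus (k : ℕ) {q : ℕ} (hq : q ≠ 2) :
    halfSymSpan (-(-1) ^ k) k q = Vminus k q := by
  simp only [Vminus, if_neg hq, halfSymSpan, zetaMinus_eq_hzetaSym]

lemma halfSymSpan_eq_Vplus (k : ℕ) {q : ℕ} (hq : q ≠ 2) :
    halfSymSpan ((-1) ^ k) k q = Vplus k q := by
  simp only [Vplus, if_neg hq, halfSymSpan, zetaPlus_eq_hzetaSym]

theorem stmt_7 (k q' p : ℕ) (hk : 2 ≤ k) (hq' : 2 ≤ q') (hp : Nat.Prime p) :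
    Vminus k q' ≤ Vminus k (p * q') ∧ Vplus k q' ≤ Vplus k (p * q') := by
  have hpq : p * q' ≠ 2 := by nlinarith [hp.two_le]
  constructor
  · calc Vminus k q' ≤ symSpan (-(-1) ^ k) k q' := Vminus_le_symSpan k q'
      _ ≤ symSpan (-(-1) ^ k) k (p * q') := symSpan_le_symSpan_mul _ hk hp q'
      _ ≤ halfSymSpan (-(-1) ^ k) k (p * q') :=
        symSpan_le_halfSymSpan (by rw [neg_mul_neg, ← mul_pow]; norm_num) k hpq
      _ = Vminus k (p * q') := halfSymSpan_eq_Vminus k hpq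
  · calc Vplus k q' ≤ symSpan ((-1) ^ k) k q' := Vplus_le_symSpan k q'
      _ ≤ symSpan ((-1) ^ k) k (p * q') := symSpan_le_symSpan_mul _ hk hp q'
      _ ≤ halfSymSpan ((-1) ^ k) k (p * q') :=
        symSpan_le_halfSymSpan (by rw [← mul_pow]; norm_num) k hpq
      _ = Vplus k (p * q') := halfSymSpan_eq_Vplus k hpq
end

section
/- Let k ≥ 2 and q ≥ 3 be integers. Then for any divisor q' ≥ 2 of q, one has V_k⁻(q') ⊆ V_k⁻(q), V_k⁺(q') ⊆ V_k⁺(q), and V_k(q') ⊆ V_k(q). -/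
open Finset

/-!
The Hurwitz zeta function satisfies the distribution relation
`p ^ k * ζ(k, x) = ∑ j < p, ζ(k, (x + j) / p)`, and hence so do `ζ⁻` and `ζ⁺`. It suffices to
pass from `q` to `p * q` with `p` prime. At `x = a / q` the relation expresses `p ^ k * ζ(k, a / q)`
through the values at `(a + j q) / (p q)`. If `p ∣ q`, all these numerators are coprime to `p q`.
Otherwise exactly one of them is a multiple `p b`, with `p b ≡ a [MOD q]`, and its term is
`ζ(k, b / q)`; so `ζ(k, b / q) ≡ p ^ k * ζ(k, (p b % q) / q)` modulo `V_k(p q)`. Following the orbit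
of `b` under multiplication by `p` modulo `q`, which returns to `b` after `φ q` steps, gives
`(p ^ (k φ(q)) - 1) * ζ(k, b / q) ∈ V_k(p q)`. Finally, `x ↦ 1 - x` multiplies `ζ⁻` and `ζ⁺` by
`±1`, so their spans over `2 a < q` equal those over all `a < q`.
-/

lemma Nat.one_le_of_coprime {c q : ℕ} (hq : 2 ≤ q) (h : c.Coprime q) : 1 ≤ c := by
  by_contra! h0
  rw [Nat.lt_one_iff.mp h0, Nat.coprime_zero_left] at h
  omega

lemma Nat.eq_of_prime_dvd_add_mul {p q a i j : ℕ} (hp : p.Prime) (hpq : ¬p ∣ q) (hi : i < p)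
    (hj : j < p) (hai : p ∣ a + i * q) (haj : p ∣ a + j * q) : i = j := by
  have h : a + i * q ≡ a + j * q [MOD p] :=
    (Nat.modEq_zero_iff_dvd.mpr hai).trans (Nat.modEq_zero_iff_dvd.mpr haj).symm
  have hcop : Nat.gcd p q = 1 := (Nat.Prime.coprime_iff_not_dvd hp).mpr hpq
  exact ((Nat.ModEq.add_left_cancel' a h).cancel_right_of_coprime hcop).eq_of_lt_of_lt hi hj

lemma ZMod.sum_val_eq_sum_range {M : Type*} [AddCommMonoid M] (N : ℕ) [NeZero N] (g : ℕ → M) :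
    ∑ j : ZMod N, g j.val = ∑ j ∈ range N, g j := by
  obtain ⟨n, rfl⟩ := Nat.exists_eq_succ_of_ne_zero (NeZero.ne N)
  exact Fin.sum_univ_eq_sum_range g _

lemma summable_one_div_add_pow {k : ℕ} (hk : 2 ≤ k) {x : ℝ} (hx : 0 < x) :
    Summable fun m : ℕ => 1 / ((m : ℝ) + x) ^ k := by
  refine ((Real.summable_one_div_nat_add_rpow x k).mpr (by exact_mod_cast hk)).congr fun m => ?_
  rw [abs_of_pos (by positivity), Real.rpow_natCast]

lemma neg_one_pow_sq (k : ℕ) : ((-1 : ℝ) ^ k) ^ 2 = 1 := by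
  rw [← pow_mul, mul_comm, pow_mul, neg_one_sq, one_pow]

def IsDistribution (k : ℕ) (f : ℝ → ℝ) : Prop :=
  ∀ p : ℕ, 0 < p → ∀ x ∈ Set.Ioo (0 : ℝ) 1, (p : ℝ) ^ k * f x = ∑ j ∈ range p, f ((x + j) / p)

namespace IsDistribution

variable {k : ℕ} {f g : ℝ → ℝ}

lemma add (hf : IsDistribution k f) (hg : IsDistribution k g) :
    IsDistribution k fun x => f x + g x := fun p hp x hx => by
  rw [sum_add_distrib, mul_add, hf p hp x hx, hg p hp x hx]

lemma sub (hf : IsDistribution k f) (hg : IsDistribution k g) :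
    IsDistribution k fun x => f x - g x := fun p hp x hx => by
  rw [sum_sub_distrib, mul_sub, hf p hp x hx, hg p hp x hx]

lemma const_mul (hf : IsDistribution k f) (c : ℝ) : IsDistribution k fun x => c * f x :=
  fun p hp x hx => by rw [← mul_sum, mul_left_comm, hf p hp x hx]

lemma comp_one_sub (hf : IsDistribution k f) : IsDistribution k fun x => f (1 - x) := by
  intro p hp x hx
  have hx' : 1 - x ∈ Set.Ioo (0 : ℝ) 1 := ⟨by linarith [hx.2], by linarith [hx.1]⟩
  rw [hf p hp _ hx', ← sum_range_reflect]
  refine sum_congr rfl fun j hj => ?_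
  have hj : j + 1 ≤ p := mem_range.mp hj
  rw [Nat.cast_sub (by omega), Nat.cast_sub hp, Nat.cast_one]
  congr 1
  field_simp
  ring

end IsDistribution

lemma isDistribution_hzeta {k : ℕ} (hk : 2 ≤ k) : IsDistribution k (hzeta k) := by
  intro p hp x hx
  have : NeZero p := ⟨hp.ne'⟩
  rw [hzeta, Nat.sumByResidueClasses (summable_one_div_add_pow hk hx.1) p, mul_sum,
    ZMod.sum_val_eq_sum_range p
      fun j => (p : ℝ) ^ k * ∑' m : ℕ, 1 / (((j + p * m : ℕ) : ℝ) + x) ^ k]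
  refine sum_congr rfl fun j _ => ?_
  rw [hzeta, ← tsum_mul_left]
  congr 1 with m
  rw [show (m : ℝ) + (x + j) / p = (((j + p * m : ℕ) : ℝ) + x) / p by push_cast; field_simp; ring,
    div_pow, one_div_div, mul_one_div]

noncomputable def coprimeSpan (f : ℝ → ℝ) (q : ℕ) : Submodule ℚ ℝ :=
  Submodule.span ℚ {y | ∃ c : ℕ, 1 ≤ c ∧ c < q ∧ Nat.gcd c q = 1 ∧ y = f (c / q)}

section coprimeSpan

variable {k : ℕ} {f : ℝ → ℝ} {p q a j : ℕ}

lemma apply_div_mem_coprimeSpan (ha1 : 1 ≤ a) (ha : a < q) (hcop : a.Coprime q) :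
    f (a / q) ∈ coprimeSpan f q :=
  Submodule.subset_span ⟨a, ha1, ha, hcop, rfl⟩

lemma apply_add_mul_div_mem_coprimeSpan_mul (hp : p.Prime) (ha1 : 1 ≤ a) (ha : a < q)
    (hcop : a.Coprime q) (hj : j < p) (hpj : ¬p ∣ a + j * q) :
    f ((a + j * q : ℕ) / (p * q : ℕ)) ∈ coprimeSpan f (p * q) := by
  refine apply_div_mem_coprimeSpan (by omega) ?_ ?_
  · nlinarith
  · exact Nat.Coprime.mul_right (Nat.coprime_comm.mp ((hp.coprime_iff_not_dvd).mpr hpj))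
      ((Nat.coprime_add_mul_right_left a q j).mpr hcop)

lemma IsDistribution.pow_mul_apply_div (hf : IsDistribution k f) (hp : 0 < p)
    (ha1 : 1 ≤ a) (ha : a < q) :
    (p : ℝ) ^ k * f (a / q) = ∑ j ∈ range p, f ((a + j * q : ℕ) / (p * q : ℕ)) := by
  have hq : (0 : ℝ) < q := by norm_cast; omega
  rw [hf p hp _ ⟨by positivity, by rw [div_lt_one hq]; exact_mod_cast ha⟩]
  refine sum_congr rfl fun j _ => ?_
  congr 1
  push_cast
  field_simp

lemma IsDistribution.apply_div_mem_coprimeSpan_mul_of_dvd (hf : IsDistribution k f)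
    (hp : p.Prime) (hpq : p ∣ q) (ha1 : 1 ≤ a) (ha : a < q) (hcop : a.Coprime q) :
    f (a / q) ∈ coprimeSpan f (p * q) := by
  have hterms : ∀ j ∈ range p, f ((a + j * q : ℕ) / (p * q : ℕ)) ∈ coprimeSpan f (p * q) := by
    intro j hj
    refine apply_add_mul_div_mem_coprimeSpan_mul hp ha1 ha hcop (mem_range.mp hj) fun hpj => ?_
    have hpa : p ∣ a := (Nat.dvd_add_left (dvd_mul_of_dvd_right hpq j)).mp hpj
    exact hp.one_lt.ne' (Nat.eq_one_of_dvd_coprimes hcop hpa hpq)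
  have hsum := Submodule.sum_mem _ hterms
  rw [← hf.pow_mul_apply_div hp.pos ha1 ha, ← Rat.cast_natCast, ← Rat.cast_pow, ← Rat.smul_def,
    Submodule.smul_mem_iff _ (by simp [hp.ne_zero])] at hsum
  exact hsum

lemma IsDistribution.apply_div_smodEq_mul_mod (hf : IsDistribution k f) (hp : p.Prime)
    (hpq : ¬p ∣ q) (hq : 2 ≤ q) {b : ℕ} (hb : b < q) (hcop : b.Coprime q) :
    f (b / q) ≡ ((p : ℚ) ^ k) • f ((p * b % q : ℕ) / q) [SMOD coprimeSpan f (p * q)] := by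
  set a := p * b % q
  set j₀ := p * b / q
  have hcopa : a.Coprime q := (ZMod.coprime_mod_iff_coprime _ q).mpr
    (Nat.Coprime.mul_left ((Nat.Prime.coprime_iff_not_dvd hp).mpr hpq) hcop)
  have ha1 : 1 ≤ a := Nat.one_le_of_coprime hq hcopa
  have ha : a < q := Nat.mod_lt _ (by omega)
  have hj₀ : j₀ < p := (Nat.div_lt_iff_lt_mul (by omega)).mpr
    (mul_comm q p ▸ (Nat.mul_lt_mul_left hp.pos).mpr hb)
  have haj₀ : a + j₀ * q = p * b := by rw [mul_comm]; exact Nat.mod_add_div _ _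
  have hdist := hf.pow_mul_apply_div hp.pos ha1 ha
  have hcancel : ((p * b : ℕ) : ℝ) / (p * q : ℕ) = b / q := by
    push_cast
    exact mul_div_mul_left _ _ (by exact_mod_cast hp.ne_zero)
  rw [← add_sum_erase _ _ (mem_range.mpr hj₀), haj₀, hcancel] at hdist
  rw [SModEq.comm, SModEq.sub_mem, Rat.smul_def, Rat.cast_pow, Rat.cast_natCast, hdist,
    add_sub_cancel_left]
  refine Submodule.sum_mem _ fun j hj => ?_
  obtain ⟨hne, hj⟩ := mem_erase.mp hj
  refine apply_add_mul_div_mem_coprimeSpan_mul hp ha1 ha hcopa (mem_range.mp hj) fun hpj => ?_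
  exact hne (Nat.eq_of_prime_dvd_add_mul hp hpq (mem_range.mp hj) hj₀ hpj
    (haj₀ ▸ dvd_mul_right p b))

lemma IsDistribution.apply_div_mem_coprimeSpan_mul_of_not_dvd (hf : IsDistribution k f)
    (hk : k ≠ 0) (hp : p.Prime) (hpq : ¬p ∣ q) (hq : 2 ≤ q) {b : ℕ} (hb : b < q)
    (hcop : b.Coprime q) : f (b / q) ∈ coprimeSpan f (p * q) := by
  have hpq' : p.Coprime q := (Nat.Prime.coprime_iff_not_dvd hp).mpr hpq
  have horbit : ∀ n, f (b / q) ≡ ((p : ℚ) ^ k) ^ n • f ((p ^ n * b % q : ℕ) / q)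
      [SMOD coprimeSpan f (p * q)] := by
    intro n
    induction n with
    | zero => simp [Nat.mod_eq_of_lt hb]
    | succ n ih =>
      have hstep := hf.apply_div_smodEq_mul_mod hp hpq hq (Nat.mod_lt _ (by omega : 0 < q))
        ((ZMod.coprime_mod_iff_coprime _ q).mpr ((Nat.Coprime.pow_left n hpq').mul_left hcop))
      rw [Nat.mul_mod_mod, ← mul_assoc, ← pow_succ'] at hstep
      rw [pow_succ, mul_smul]
      exact ih.trans (hstep.smul _)
  have hperiod : p ^ q.totient * b % q = b := by
    have h : p ^ q.totient * b ≡ b [MOD q] := by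
      simpa using (Nat.ModEq.pow_totient hpq').mul_right b
    exact Eq.trans h (Nat.mod_eq_of_lt hb)
  have hr : ((p : ℚ) ^ k) ^ q.totient - 1 ≠ 0 := sub_ne_zero.mpr (one_lt_pow₀
    (one_lt_pow₀ (by exact_mod_cast hp.one_lt) hk) (Nat.totient_pos.mpr (by omega)).ne').ne'
  have h := (SModEq.sub_mem.mp (horbit q.totient).symm)
  rwa [hperiod, ← one_smul ℚ (f (b / q)), smul_smul, mul_one, ← sub_smul,
    Submodule.smul_mem_iff _ hr] at h

lemma IsDistribution.coprimeSpan_le_mul (hf : IsDistribution k f) (hk : k ≠ 0) (hp : p.Prime)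
    (hq : 2 ≤ q) : coprimeSpan f q ≤ coprimeSpan f (p * q) := by
  refine Submodule.span_le.mpr ?_
  rintro _ ⟨a, ha1, ha, hcop, rfl⟩
  by_cases hpq : p ∣ q
  · exact hf.apply_div_mem_coprimeSpan_mul_of_dvd hp hpq ha1 ha hcop
  · exact hf.apply_div_mem_coprimeSpan_mul_of_not_dvd hk hp hpq hq ha hcop

lemma IsDistribution.coprimeSpan_mono (hf : IsDistribution k f) (hk : k ≠ 0) {q' : ℕ}
    (hq' : 2 ≤ q') (hdvd : q' ∣ q) (hq : q ≠ 0) : coprimeSpan f q' ≤ coprimeSpan f q := by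
  obtain ⟨d, rfl⟩ := hdvd
  rw [mul_comm]
  induction d using induction_on_primes generalizing q' with
  | zero => simp at hq
  | one => rw [one_mul]
  | prime_mul p d hp ih =>
    have hd : d ≠ 0 := by rintro rfl; simp at hq
    exact (ih hq' (mul_ne_zero (by omega) hd)).trans
      ((mul_assoc p d q' ▸ hf.coprimeSpan_le_mul hk hp (by nlinarith [Nat.pos_of_ne_zero hd])))

end coprimeSpan

lemma Vfull_eq_coprimeSpan (k q : ℕ) : Vfull k q = coprimeSpan (hzeta k) q := rfl

lemma coprimeSpan_two (f : ℝ → ℝ) : coprimeSpan f 2 = ℚ ∙ f ((1 : ℕ) / (2 : ℕ)) := by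
  unfold coprimeSpan
  congr 1
  ext y
  constructor
  · rintro ⟨c, hc1, hc2, -, rfl⟩
    obtain rfl : c = 1 := by omega
    rfl
  · rintro rfl
    exact ⟨1, le_rfl, one_lt_two, rfl, rfl⟩

lemma coprimeSpan_eq_of_one_sub {f : ℝ → ℝ} (ε : ℚ) (hf : ∀ x, f (1 - x) = ε • f x) {q : ℕ}
    (hq : 3 ≤ q) :
    coprimeSpan f q =
      Submodule.span ℚ {y | ∃ a : ℕ, 1 ≤ a ∧ 2 * a < q ∧ Nat.gcd a q = 1 ∧ y = f (a / q)} := by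
  apply le_antisymm <;> refine Submodule.span_le.mpr ?_
  · rintro _ ⟨c, hc1, hc, hcop, rfl⟩
    rcases lt_trichotomy (2 * c) q with hlt | heq | hgt
    · exact Submodule.subset_span ⟨c, hc1, hlt, hcop, rfl⟩
    · simp [← heq] at hcop
      omega
    · have hrefl : (c : ℝ) / q = 1 - ((q - c : ℕ) : ℝ) / q := by
        rw [Nat.cast_sub hc.le]; field_simp; ring
      rw [hrefl, hf]
      exact Submodule.smul_mem _ _ (Submodule.subset_span
        ⟨q - c, by omega, by omega, (Nat.coprime_self_sub_left hc.le).mpr hcop, rfl⟩)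
  · rintro _ ⟨a, ha1, ha, hcop, rfl⟩
    exact Submodule.subset_span ⟨a, ha1, by omega, hcop, rfl⟩

lemma Vminus_eq_coprimeSpan (k : ℕ) {q : ℕ} (hq : 2 ≤ q) :
    Vminus k q = coprimeSpan (fun x => hzeta k x - (-1) ^ k * hzeta k (1 - x)) q := by
  rw [Vminus]
  split_ifs with h2
  · rw [h2, coprimeSpan_two]
    rfl
  · symm
    refine coprimeSpan_eq_of_one_sub (-(-1) ^ k) (fun x => ?_) (by omega)
    rw [sub_sub_cancel, Rat.smul_def]
    push_cast
    linear_combination -hzeta k (1 - x) * neg_one_pow_sq k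

lemma Vplus_eq_coprimeSpan (k : ℕ) {q : ℕ} (hq : 2 ≤ q) :
    Vplus k q = coprimeSpan (fun x => hzeta k x + (-1) ^ k * hzeta k (1 - x)) q := by
  rw [Vplus]
  split_ifs with h2
  · rw [h2, coprimeSpan_two]
    rfl
  · symm
    refine coprimeSpan_eq_of_one_sub ((-1) ^ k) (fun x => ?_) (by omega)
    rw [sub_sub_cancel, Rat.smul_def]
    push_cast
    linear_combination -hzeta k (1 - x) * neg_one_pow_sq k

theorem stmt_8 (k q : ℕ) (hk : 2 ≤ k) (hq : 3 ≤ q) :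
    ∀ q' : ℕ, 2 ≤ q' → q' ∣ q →
      Vminus k q' ≤ Vminus k q ∧ Vplus k q' ≤ Vplus k q ∧ Vfull k q' ≤ Vfull k q := by
  intro q' hq' hdvd
  have hζ := isDistribution_hzeta hk
  have hmono {f : ℝ → ℝ} (hf : IsDistribution k f) : coprimeSpan f q' ≤ coprimeSpan f q :=
    hf.coprimeSpan_mono (by omega) hq' hdvd (by omega)
  rw [Vminus_eq_coprimeSpan k hq', Vminus_eq_coprimeSpan k (by omega : 2 ≤ q),
    Vplus_eq_coprimeSpan k hq', Vplus_eq_coprimeSpan k (by omega : 2 ≤ q),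
    Vfull_eq_coprimeSpan, Vfull_eq_coprimeSpan]
  exact ⟨hmono (hζ.sub (hζ.comp_one_sub.const_mul _)),
    hmono (hζ.add (hζ.comp_one_sub.const_mul _)), hmono hζ⟩
end

section
/- Let k ≥ 2 be an integer. There exist rational constants c_l, indexed by integers l with 0 ≤ l ≤ k−2 and l ≡ k (mod 2), depending only on k, such that c_{k−2} ≠ 0 and sin^k(πz)·cot_k(πz) = ∑_{0 ≤ l ≤ k−2, l ≡ k mod 2} c_l·cos(lπz) for every z ∈ ℂ ∖ ℤ. -/
open Finset

/-- `cot_k(z) = ((−1)^{k−1}/(k−1)!) · (d/dz)^{k−1} cot(z)`. -/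
noncomputable def cotk (k : ℕ) (z : ℂ) : ℂ :=
  ((-1 : ℂ) ^ (k - 1) / (Nat.factorial (k - 1) : ℂ)) *
    iteratedDeriv (k - 1) (fun w : ℂ => Complex.cos w / Complex.sin w) z

/-!
Since `cot_{k+1} = -cot_k' / k`, the functions `F_k = sin^k · cot_k` satisfy
`F_{k+1} = cos · F_k - sin · F_k' / k` and `F_2 = 1`. Hence `F_k = P_k(cos)` for rational
polynomials with `P_{k+1} = X P_k + (1 - X²) P_k' / k`, which have degree `k - 2`, a nonzero
leading coefficient and the parity of `k`. Expanding `P_k` in the Chebyshev polynomials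
`T_l` of that parity and using `T_l(cos w) = cos (l w)` gives the cosine sum.
-/

open Polynomial Complex

theorem Finset.sum_eq_sum_filter_mod_two_of_sum_neg_one_pow_mul {R : Type*} [CommRing R]
    [NoZeroDivisors R] [CharZero R] {s : Finset ℕ} {t : ℕ → R} {n : ℕ}
    (h : ∑ i ∈ s, (-1) ^ i * t i = (-1) ^ n * ∑ i ∈ s, t i) :
    ∑ i ∈ s, t i = ∑ i ∈ s with i % 2 = n % 2, t i := by
  have hpow : ∀ {i j : ℕ}, i % 2 = j % 2 → (-1 : R) ^ i = (-1) ^ j := fun hij => by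
    rw [neg_one_pow_eq_pow_mod_two, hij, ← neg_one_pow_eq_pow_mod_two]
  have hsame : ∑ i ∈ s with i % 2 = n % 2, (-1) ^ i * t i
      = (-1) ^ n * ∑ i ∈ s with i % 2 = n % 2, t i := by
    rw [mul_sum]
    exact sum_congr rfl fun i hi => by rw [hpow (mem_filter.1 hi).2]
  have hother : ∑ i ∈ s with ¬i % 2 = n % 2, (-1) ^ i * t i
      = -((-1) ^ n * ∑ i ∈ s with ¬i % 2 = n % 2, t i) := by
    rw [mul_sum, ← sum_neg_distrib]
    refine sum_congr rfl fun i hi => ?_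
    rw [hpow (j := n + 1) (by have := (mem_filter.1 hi).2; omega), pow_succ]
    ring
  rw [← sum_filter_add_sum_filter_not s (fun i => i % 2 = n % 2), hsame, hother] at h
  rw [← sum_filter_add_sum_filter_not s (fun i => i % 2 = n % 2), add_eq_left,
    ← add_self_eq_zero, ← mul_eq_zero_iff_left (pow_ne_zero n (neg_ne_zero.2 one_ne_zero))]
  linear_combination -h + (-1) ^ n * sum_filter_add_sum_filter_not s (fun i => i % 2 = n % 2) t

namespace Polynomial

theorem coeff_one_sub_X_sq_mul_derivative {R : Type*} [CommRing R] {p : R[X]} {n : ℕ}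
    (hp : p.natDegree ≤ n) : ((1 - X ^ 2) * derivative p).coeff (n + 1) = -(n * p.coeff n) := by
  rw [sub_mul, one_mul, coeff_sub, coeff_derivative,
    coeff_eq_zero_of_natDegree_lt (by omega : p.natDegree < n + 1 + 1), zero_mul, zero_sub]
  cases n with
  | zero => simp [coeff_X_pow_mul']
  | succ n =>
    rw [coeff_X_pow_mul', if_pos (by omega), show n + 1 + 1 - 2 = n by omega, coeff_derivative]
    push_cast
    ring

namespace Chebyshev

theorem T_comp_neg_X {R : Type*} [CommRing R] [IsDomain R] [Infinite R] (n : ℕ) :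
    (T R n).comp (-X) = (-1) ^ n * T R n :=
  Polynomial.funext fun x => by simp [eval_comp, T_eval_neg]

variable {K : Type*} [Field K]

theorem exists_eq_sum_smul_T [NeZero (2 : K)] {p : K[X]} {n : ℕ} (hp : p.natDegree ≤ n) :
    ∃ c : ℕ → K, p = ∑ i ∈ range (n + 1), c i • T K i := by
  have hmem : p ∈ degreeLT K (n + 1) :=
    mem_degreeLT.2 ((degree_le_of_natDegree_le hp).trans_lt (by exact_mod_cast n.lt_succ_self))
  rw [← Sequence.span_degreeLT (chebyshevTsequence K)
      (fun i _ => by simp [chebyshevTsequence, two_ne_zero]),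
    show Set.Iio (n + 1) = (range (n + 1) : Set ℕ) by simp,
    Submodule.mem_span_image_finset_iff_exists_fun'] at hmem
  obtain ⟨c, hc⟩ := hmem
  exact ⟨c, hc.symm⟩

theorem coeff_sum_smul_T_self [NeZero (2 : K)] (c : ℕ → K) (n : ℕ) :
    (∑ i ∈ range (n + 1), c i • T K i).coeff n = c n * 2 ^ (n - 1) := by
  rw [finsetSum_coeff, sum_range_succ, sum_eq_zero fun i hi => ?_]
  · have hT := leadingCoeff_T K n
    rw [leadingCoeff, natDegree_T, Int.natAbs_natCast] at hT
    rw [zero_add, coeff_smul, hT, smul_eq_mul]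
  · rw [coeff_smul, coeff_eq_zero_of_natDegree_lt (by simpa using hi), smul_zero]

theorem exists_eq_sum_filter_smul_T [CharZero K] {p : K[X]} {n : ℕ}
    (hdeg : p.natDegree ≤ n) (hpar : p.comp (-X) = (-1) ^ n * p) :
    ∃ c : ℕ → K, c n * 2 ^ (n - 1) = p.coeff n ∧
      p = ∑ i ∈ range (n + 1) with i % 2 = n % 2, c i • T K i := by
  obtain ⟨c, rfl⟩ := exists_eq_sum_smul_T hdeg
  refine ⟨c, (coeff_sum_smul_T_self c n).symm, sum_eq_sum_filter_mod_two_of_sum_neg_one_pow_mul ?_⟩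
  rw [← hpar, Polynomial.sum_comp]
  refine sum_congr rfl fun i _ => ?_
  rw [smul_comp, T_comp_neg_X, mul_smul_comm]

end Chebyshev

end Polynomial

theorem deriv_cotk_succ (m : ℕ) (w : ℂ) :
    deriv (cotk (m + 1)) w = -(m + 1 : ℂ) * cotk (m + 2) w := by
  have hfac : ((m + 1).factorial : ℂ) = (m + 1) * m.factorial := by
    push_cast [Nat.factorial_succ]; ring
  unfold cotk
  simp only [Nat.add_sub_cancel, show m + 2 - 1 = m + 1 by omega]
  rw [deriv_const_mul_field', ← iteratedDeriv_succ, hfac]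
  field_simp
  ring

theorem cotk_two {w : ℂ} (hw : sin w ≠ 0) : cotk 2 w = 1 / sin w ^ 2 := by
  simp only [cotk, Nat.reduceSub, iteratedDeriv_one, Nat.factorial_one]
  rw [deriv_fun_div differentiableAt_cos differentiableAt_sin hw, Complex.deriv_cos,
    Complex.deriv_sin]
  field_simp
  linear_combination sin_sq_add_cos_sq w

theorem sin_pow_mul_cotk_succ {m : ℕ} {g : ℂ → ℂ} {g' w : ℂ} (hw : sin w ≠ 0)
    (hg : HasDerivAt g g' w) (h : ∀ᶠ z in nhds w, sin z ^ (m + 1) * cotk (m + 1) z = g z) :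
    sin w ^ (m + 2) * cotk (m + 2) w = cos w * g w - sin w * g' / (m + 1) := by
  have hcot : cotk (m + 1) =ᶠ[nhds w] fun z => g z / sin z ^ (m + 1) := by
    filter_upwards [h, (isOpen_ne_fun continuous_sin continuous_const).mem_nhds hw] with z hz hz0
    rw [eq_div_iff (pow_ne_zero _ hz0), mul_comm, hz]
  have hderiv := (hg.fun_div ((hasDerivAt_sin w).fun_pow (m + 1)) (pow_ne_zero _ hw)).deriv
  have hcotk : cotk (m + 2) w = -deriv (cotk (m + 1)) w / (m + 1) := by
    rw [deriv_cotk_succ]; field_simp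
  rw [hcotk, hcot.deriv_eq, hderiv]
  field_simp
  push_cast
  ring

-- `cotkPoly n` is the polynomial `P_{n+2}` of the recursion above.
noncomputable def cotkPoly : ℕ → ℚ[X]
  | 0 => 1
  | n + 1 => X * cotkPoly n + C (1 / (n + 2 : ℚ)) * (1 - X ^ 2) * derivative (cotkPoly n)

theorem sin_pow_mul_cotk_eq_aeval_cotkPoly (n : ℕ) {w : ℂ} (hw : sin w ≠ 0) :
    sin w ^ (n + 2) * cotk (n + 2) w = aeval (cos w) (cotkPoly n) := by
  induction n generalizing w with
  | zero =>
    rw [cotk_two hw, cotkPoly, map_one]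
    field_simp
  | succ n ih =>
    have hg := ((cotkPoly n).hasDerivAt_aeval (cos w)).comp w (hasDerivAt_cos w)
    have h : ∀ᶠ z in nhds w,
        sin z ^ (n + 1 + 1) * cotk (n + 1 + 1) z = aeval (cos z) (cotkPoly n) := by
      filter_upwards [(isOpen_ne_fun continuous_sin continuous_const).mem_nhds hw] with z hz
      exact ih hz
    rw [sin_pow_mul_cotk_succ hw hg h, cotkPoly]
    simp only [Function.comp_apply, map_add, map_mul, map_sub, map_one, map_pow, aeval_X, aeval_C,
      eq_ratCast, Rat.cast_div, Rat.cast_one, Rat.cast_add, Rat.cast_natCast, Rat.cast_ofNat]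
    push_cast
    linear_combination (aeval (cos w) (derivative (cotkPoly n)) / (n + 2)) * sin_sq_add_cos_sq w

theorem natDegree_cotkPoly_le (n : ℕ) : (cotkPoly n).natDegree ≤ n := by
  induction n with
  | zero => simp [cotkPoly]
  | succ n ih =>
    rcases n with _ | n
    · simp [cotkPoly]
    rw [cotkPoly]
    compute_degree
    omega

theorem coeff_cotkPoly_self (n : ℕ) : (cotkPoly n).coeff n = 2 ^ n / (n + 1).factorial := by
  induction n with
  | zero => simp [cotkPoly]
  | succ n ih =>
    rw [cotkPoly, coeff_add, coeff_X_mul, mul_assoc, coeff_C_mul,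
      coeff_one_sub_X_sq_mul_derivative (natDegree_cotkPoly_le n), ih]
    push_cast [Nat.factorial_succ]
    field_simp
    ring

theorem cotkPoly_comp_neg_X (n : ℕ) : (cotkPoly n).comp (-X) = (-1) ^ n * cotkPoly n := by
  induction n with
  | zero => simp [cotkPoly]
  | succ n ih =>
    have hder : (derivative (cotkPoly n)).comp (-X)
        = (-1) ^ (n + 1) * derivative (cotkPoly n) := by
      have := congrArg derivative ih
      rw [derivative_comp] at this
      simp only [derivative_neg, derivative_X, neg_mul, one_mul, derivative_mul, derivative_pow,
        map_natCast, derivative_one, neg_zero, mul_zero, zero_mul, zero_add] at this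
      linear_combination -this
    rw [cotkPoly]
    simp only [add_comp, mul_comp, X_comp, C_comp, sub_comp, one_comp, pow_comp, ih, hder]
    ring

theorem exists_sin_pow_mul_cotk_eq_sum_cos (n : ℕ) :
    ∃ c : ℕ → ℚ, c n ≠ 0 ∧ ∀ w : ℂ, sin w ≠ 0 →
      sin w ^ (n + 2) * cotk (n + 2) w
        = ∑ l ∈ range (n + 1) with l % 2 = n % 2, (c l : ℂ) * cos (l * w) := by
  obtain ⟨c, hcn, hc⟩ :=
    Chebyshev.exists_eq_sum_filter_smul_T (natDegree_cotkPoly_le n) (cotkPoly_comp_neg_X n)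
  refine ⟨c, fun h => ?_, fun w hw => ?_⟩
  · rw [coeff_cotkPoly_self, h, zero_mul] at hcn
    exact (div_ne_zero (by positivity) (by positivity)) hcn.symm
  · rw [sin_pow_mul_cotk_eq_aeval_cotkPoly n hw, hc, map_sum]
    refine sum_congr rfl fun l _ => ?_
    rw [map_smul, Chebyshev.aeval_T, Chebyshev.T_complex_cos, Rat.smul_def]
    norm_cast

theorem stmt_12 (k : ℕ) (hk : 2 ≤ k) :
    ∃ c : ℕ → ℚ, c (k - 2) ≠ 0 ∧
      ∀ z : ℂ, (∀ m : ℤ, z ≠ (m : ℂ)) →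
        Complex.sin ((Real.pi : ℂ) * z) ^ k * cotk k ((Real.pi : ℂ) * z)
          = ∑ l ∈ (Finset.range (k - 1)).filter (fun l => l % 2 = k % 2),
              (c l : ℂ) * Complex.cos ((l : ℂ) * (Real.pi : ℂ) * z) := by
  obtain ⟨n, rfl⟩ := Nat.exists_eq_add_of_le' hk
  obtain ⟨c, hcn, hc⟩ := exists_sin_pow_mul_cotk_eq_sum_cos n
  refine ⟨c, by simpa using hcn, fun z hz => ?_⟩
  have hsin : sin (Real.pi * z) ≠ 0 := by
    rw [sin_ne_zero_iff]
    intro m hm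
    exact hz m (mul_left_cancel₀ (ofReal_ne_zero.2 Real.pi_ne_zero) (hm.trans (mul_comm _ _)))
  simp only [hc _ hsin, Nat.add_succ_sub_one, Nat.add_mod_right, mul_assoc]
end

section
/- For every z ∈ ℂ ∖ (−∞, 0], |logΓ(z) − ((z − 1/2)·log z − z + log(2π)/2)| ≤ (π/8) · 1/dist(z, ℝ_{≤0}), where dist(z, ℝ_{≤0}) is the distance from z to the set (−∞, 0] ⊂ ℂ. -/
/-!
Put `stirlingTerm w = (w + 1/2) (log (w + 1) - log w) - 1`. Telescoping the partial sums of the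
series defining `logΓ`, and using `H_N - log N → γ` together with Stirling's formula for `N!`,
gives `logΓ z - ((z - 1/2) log z - z + log (2π) / 2) = ∑_{n ≥ 0} stirlingTerm (z + n)`.
Integration by parts gives `stirlingTerm w = ∫₀¹ (t - t²)/2 · (w + t)⁻² dt`, and
`0 ≤ (t - t²)/2 ≤ 1/8`, so the sum is at most `(1/8) ∫₀^∞ |z + s|⁻² ds`. If `d` is the distance
from `z` to `(-∞, 0]`, then `|z + s|² ≥ (s + min (Re z) 0)² + d²` for `s ≥ 0`, and the integral
of the reciprocal of the right side over `[0, ∞)` is at most `π / d`.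
-/

/-- The Log Gamma function, defined on `ℂ ∖ (−∞, 0]` by
`logΓ(z) = −γz − log z + ∑_{m=1}^∞ (z/m − log(1 + z/m))`. -/
noncomputable def logGamma (z : ℂ) : ℂ :=
  -(Real.eulerMascheroniConstant : ℂ) * z - Complex.log z +
    ∑' m : ℕ, (z / ((m : ℂ) + 1) - Complex.log (1 + z / ((m : ℂ) + 1)))

open Complex Filter Topology Finset Metric

lemma add_ofReal_mem_slitPlane {z : ℂ} (hz : z ∈ slitPlane) {t : ℝ} (ht : 0 ≤ t) :
    z + t ∈ slitPlane := by
  rw [mem_slitPlane_iff] at hz ⊢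
  simp only [add_re, add_im, ofReal_re, ofReal_im, add_zero]
  exact hz.imp (fun h => by linarith) id

lemma compl_slitPlane : slitPlaneᶜ = {w : ℂ | w.im = 0 ∧ w.re ≤ 0} := by
  ext w
  simp [mem_slitPlane_iff, not_or, and_comm]

lemma infDist_compl_slitPlane_pos {z : ℂ} (hz : z ∈ slitPlane) : 0 < infDist z slitPlaneᶜ :=
  (isOpen_slitPlane.isClosed_compl.notMem_iff_infDist_pos ⟨0, zero_notMem_slitPlane⟩).1
    (not_not.2 hz)

lemma sq_add_infDist_sq_le_norm_add_sq (z : ℂ) {t : ℝ} (ht : 0 ≤ t) :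
    (t + min z.re 0) ^ 2 + infDist z slitPlaneᶜ ^ 2 ≤ ‖z + t‖ ^ 2 := by
  have hd := infDist_nonneg (x := z) (s := slitPlaneᶜ)
  rw [Complex.sq_norm, normSq_apply]
  simp only [add_re, add_im, ofReal_re, ofReal_im, add_zero]
  rcases le_or_gt 0 z.re with hre | hre
  · have h : infDist z slitPlaneᶜ ≤ ‖z‖ := by
      simpa using infDist_le_dist_of_mem (x := z) (Set.mem_compl zero_notMem_slitPlane)
    have h2 : infDist z slitPlaneᶜ ^ 2 ≤ z.re * z.re + z.im * z.im := by
      rw [← normSq_apply, ← Complex.sq_norm]; gcongr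
    rw [min_eq_right hre]
    nlinarith
  · have h : infDist z slitPlaneᶜ ≤ |z.im| := by
      have hmem : (z.re : ℂ) ∈ slitPlaneᶜ := by simpa using hre.le
      calc infDist z slitPlaneᶜ ≤ dist z z.re := infDist_le_dist_of_mem hmem
        _ = |z.im| := by
          rw [dist_of_re_eq (by simp), Real.dist_eq]; simp
    have h2 : infDist z slitPlaneᶜ ^ 2 ≤ z.im ^ 2 := by
      rw [← sq_abs z.im]; gcongr
    rw [min_eq_left hre.le]
    nlinarith

lemma integral_inv_sq_add_sq_le (a b c : ℝ) {d : ℝ} (hd : 0 < d) :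
    ∫ s in a..b, ((s + c) ^ 2 + d ^ 2)⁻¹ ≤ Real.pi / d := by
  have hF : ∀ s : ℝ, HasDerivAt (fun u => Real.arctan ((u + c) / d) / d)
      ((s + c) ^ 2 + d ^ 2)⁻¹ s := by
    intro s
    refine ((Real.hasDerivAt_arctan _).comp s
      (((hasDerivAt_id' s).add_const c).div_const d)).div_const d |>.congr_deriv ?_
    field_simp
    ring
  rw [intervalIntegral.integral_eq_sub_of_hasDerivAt (fun s _ => hF s)
    (Continuous.intervalIntegrable
      (Continuous.inv₀ (by fun_prop) fun s => by positivity) _ _), ← sub_div]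
  gcongr
  linarith [Real.arctan_lt_pi_div_two ((b + c) / d), Real.neg_pi_div_two_lt_arctan ((a + c) / d)]

lemma log_one_add_div_ofReal {w : ℂ} {r : ℝ} (hr : 0 < r) (hw : w + r ≠ 0) :
    log (1 + w / r) = log (w + r) - Real.log r := by
  have hr' : (r : ℂ) ≠ 0 := ofReal_ne_zero.2 hr.ne'
  have h : w + r = r * (1 + w / r) := by field_simp; ring
  rw [h, log_ofReal_mul hr (by rintro h0; simp [h0] at h; exact hw h)]
  ring

lemma Real.tendsto_log_factorial_add_sub_mul_log :
    Tendsto (fun n : ℕ => Real.log n.factorial + n - (n + 1 / 2) * Real.log n) atTop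
      (𝓝 (Real.log (2 * Real.pi) / 2)) := by
  have hlim := ((Real.continuousAt_log (Real.sqrt_pos.2 Real.pi_pos).ne').tendsto.comp
    Stirling.tendsto_stirlingSeq_sqrt_pi).add_const (Real.log 2 / 2)
  rw [Real.log_sqrt Real.pi_pos.le, ← add_div, ← Real.log_mul Real.pi_pos.ne' two_ne_zero,
    mul_comm] at hlim
  refine hlim.congr' ?_
  filter_upwards [eventually_ne_atTop 0] with n hn
  have hn' : (n : ℝ) ≠ 0 := Nat.cast_ne_zero.2 hn
  simp only [Function.comp_apply, Stirling.log_stirlingSeq_formula, Real.log_mul two_ne_zero hn',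
    Real.log_div hn' (Real.exp_ne_zero 1), Real.log_exp]
  ring

lemma summable_div_sub_log_one_add_div (z : ℂ) :
    Summable fun m : ℕ => z / ((m : ℂ) + 1) - log (1 + z / ((m : ℂ) + 1)) := by
  have hw : Tendsto (fun m : ℕ => z / ((m : ℂ) + 1)) atTop (𝓝 0) := by
    simpa [Function.comp_def] using
      (tendsto_const_div_atTop_nhds_zero_nat z).comp (tendsto_add_atTop_nat 1)
  have hO := (log_sub_self_isBigO.comp_tendsto hw).neg_left
  refine summable_of_isBigO_nat' ?_ (hO.congr_left fun m => by simp)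
  have : Summable fun m : ℕ => z ^ 2 * (((m + 1 : ℝ) ^ 2)⁻¹ : ℝ) := by
    refine Summable.mul_left _ (summable_ofReal.2 ?_)
    exact_mod_cast (summable_nat_add_iff 1).2 (Real.summable_nat_pow_inv.2 one_lt_two)
  simpa [Function.comp_def, div_eq_mul_inv, mul_pow] using this

noncomputable def stirlingTerm (w : ℂ) : ℂ := (w + 1 / 2) * (log (w + 1) - log w) - 1

lemma stirlingTerm_eq_integral {w : ℂ} (hw : w ∈ slitPlane) :
    stirlingTerm w = ∫ t in (0 : ℝ)..1, ((t : ℂ) - (t : ℂ) ^ 2) / 2 * ((w + t) ^ 2)⁻¹ := by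
  have hne : ∀ t : ℝ, 0 ≤ t → w + t ≠ 0 := fun t ht =>
    slitPlane_ne_zero (add_ofReal_mem_slitPlane hw ht)
  have hderiv : ∀ t ∈ Set.uIcc (0 : ℝ) 1, HasDerivAt
      (fun s : ℝ => (w + 1 / 2) * log (w + s) - s - ((s : ℂ) - (s : ℂ) ^ 2) / (2 * (w + s)))
      (((t : ℂ) - (t : ℂ) ^ 2) / 2 * ((w + t) ^ 2)⁻¹) t := by
    intro t ht
    rw [Set.uIcc_of_le zero_le_one] at ht
    have h0 := hne t ht.1
    have hC : HasDerivAt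
        (fun u : ℂ => (w + 1 / 2) * log (w + u) - u - (u - u ^ 2) / (2 * (w + u)))
        (((t : ℂ) - (t : ℂ) ^ 2) / 2 * ((w + t) ^ 2)⁻¹) (t : ℂ) := by
      have hu := hasDerivAt_id' (t : ℂ)
      have hlog := (hu.const_add w).clog (add_ofReal_mem_slitPlane hw ht.1)
      have hq := (hu.sub (hu.pow 2)).div ((hu.const_add w).const_mul 2)
        (mul_ne_zero two_ne_zero h0)
      refine (((hlog.const_mul (w + 1 / 2)).sub hu).sub hq).congr_deriv ?_
      simp only [Pi.sub_apply, Pi.pow_apply]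
      field_simp
      ring
    exact hC.comp_ofReal
  have hcont : ContinuousOn (fun t : ℝ => ((t : ℂ) - (t : ℂ) ^ 2) / 2 * ((w + t) ^ 2)⁻¹)
      (Set.uIcc 0 1) := by
    rw [Set.uIcc_of_le zero_le_one]
    exact ContinuousOn.mul (by fun_prop) (ContinuousOn.inv₀ (by fun_prop)
      fun t ht => pow_ne_zero 2 (hne t ht.1))
  rw [intervalIntegral.integral_eq_sub_of_hasDerivAt hderiv hcont.intervalIntegrable,
    stirlingTerm]
  norm_num
  ring

lemma norm_stirlingTerm_le {w : ℂ} (hw : w ∈ slitPlane) {c d : ℝ} (hd : 0 < d)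
    (hwcd : ∀ t ∈ Set.Icc (0 : ℝ) 1, (t + c) ^ 2 + d ^ 2 ≤ ‖w + t‖ ^ 2) :
    ‖stirlingTerm w‖ ≤ 1 / 8 * ∫ t in (0 : ℝ)..1, ((t + c) ^ 2 + d ^ 2)⁻¹ := by
  rw [stirlingTerm_eq_integral hw, ← intervalIntegral.integral_const_mul]
  refine intervalIntegral.norm_integral_le_of_norm_le zero_le_one
    (Filter.Eventually.of_forall fun t ht => ?_) (Continuous.intervalIntegrable (by
      refine continuous_const.mul (Continuous.inv₀ (by fun_prop) fun s => by positivity)) _ _)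
  have ht : t ∈ Set.Icc (0 : ℝ) 1 := Set.Ioc_subset_Icc_self ht
  have hkernel : ‖((t : ℂ) - (t : ℂ) ^ 2) / 2‖ ≤ 1 / 8 := by
    rw [show ((t : ℂ) - (t : ℂ) ^ 2) / 2 = (((t - t ^ 2) / 2 : ℝ) : ℂ) by push_cast; ring,
      norm_real, Real.norm_eq_abs, abs_le]
    constructor <;> nlinarith [ht.1, ht.2, sq_nonneg (t - 1 / 2)]
  rw [norm_mul, norm_inv, norm_pow]
  gcongr
  exact hwcd t ht

lemma sum_norm_stirlingTerm_le {z : ℂ} (hz : z ∈ slitPlane) (N : ℕ) :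
    ∑ n ∈ range N, ‖stirlingTerm (z + n)‖ ≤ Real.pi / 8 * (1 / infDist z slitPlaneᶜ) := by
  set d := infDist z slitPlaneᶜ
  set c := min z.re 0
  have hd : 0 < d := infDist_compl_slitPlane_pos hz
  have hint (a b : ℝ) :
      IntervalIntegrable (fun s : ℝ => ((s + c) ^ 2 + d ^ 2)⁻¹) MeasureTheory.volume a b :=
    (Continuous.inv₀ (by fun_prop) fun s => by positivity).intervalIntegrable a b
  have hterm (n : ℕ) :
      ‖stirlingTerm (z + n)‖ ≤ 1 / 8 * ∫ s in (n : ℝ)..n + 1, ((s + c) ^ 2 + d ^ 2)⁻¹ := by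
    have hzn : z + n ∈ slitPlane := by exact_mod_cast add_ofReal_mem_slitPlane hz n.cast_nonneg
    have hbound := norm_stirlingTerm_le hzn (c := n + c) hd fun t ht => by
      simpa [add_assoc, add_left_comm, add_comm] using
        sq_add_infDist_sq_le_norm_add_sq z (add_nonneg n.cast_nonneg ht.1)
    have hshift := intervalIntegral.integral_comp_add_right (fun s => ((s + c) ^ 2 + d ^ 2)⁻¹)
      (n : ℝ) (a := 0) (b := 1)
    simp only [zero_add, add_assoc, add_comm 1 (n : ℝ)] at hshift
    rwa [← hshift]
  calc ∑ n ∈ range N, ‖stirlingTerm (z + n)‖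
      ≤ ∑ n ∈ range N, 1 / 8 * ∫ s in (n : ℝ)..n + 1, ((s + c) ^ 2 + d ^ 2)⁻¹ :=
        sum_le_sum fun n _ => hterm n
    _ = 1 / 8 * ∫ s in (0 : ℝ)..N, ((s + c) ^ 2 + d ^ 2)⁻¹ := by
        rw [← mul_sum]
        exact_mod_cast congrArg _
          (intervalIntegral.sum_integral_adjacent_intervals (a := fun n : ℕ => (n : ℝ))
            fun n _ => hint _ _)
    _ ≤ 1 / 8 * (Real.pi / d) := by gcongr; exact integral_inv_sq_add_sq_le 0 N c hd
    _ = Real.pi / 8 * (1 / d) := by ring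

noncomputable def logGammaPartialSum (z : ℂ) (N : ℕ) : ℂ :=
  -(Real.eulerMascheroniConstant : ℂ) * z - log z +
    ∑ m ∈ range N, (z / ((m : ℂ) + 1) - log (1 + z / ((m : ℂ) + 1)))

lemma tendsto_logGammaPartialSum (z : ℂ) :
    Tendsto (logGammaPartialSum z) atTop (𝓝 (logGamma z)) :=
  (summable_div_sub_log_one_add_div z).hasSum.tendsto_sum_nat.const_add _

noncomputable def stirlingRemainder (z : ℂ) (N : ℕ) : ℂ :=
  -(Real.eulerMascheroniConstant : ℂ) * z + z * (harmonic N : ℚ) + Real.log N.factorial + N +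
    (z - 1 / 2) * log z - (z + N + 1 / 2) * log (z + N)

lemma logGammaPartialSum_eq_sum_stirlingTerm_add {z : ℂ} (hz : z ∈ slitPlane) (N : ℕ) :
    logGammaPartialSum z N = ∑ n ∈ range N, stirlingTerm (z + n) + stirlingRemainder z N := by
  induction N with
  | zero => simp [logGammaPartialSum, stirlingRemainder]; ring
  | succ N ih =>
    have hN : (0 : ℝ) < N + 1 := by positivity
    have hzN : z + ((N + 1 : ℝ) : ℂ) ≠ 0 := slitPlane_ne_zero (add_ofReal_mem_slitPlane hz hN.le)
    have hlog := log_one_add_div_ofReal hN hzN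
    push_cast at hzN hlog
    rw [logGammaPartialSum, sum_range_succ, ← add_assoc, ← logGammaPartialSum, ih,
      sum_range_succ, hlog]
    generalize ∑ n ∈ range N, stirlingTerm (z + n) = S
    simp only [stirlingRemainder, stirlingTerm, harmonic_succ, Nat.factorial_succ]
    push_cast
    rw [Real.log_mul (by positivity) (by positivity)]
    push_cast
    simp only [← add_assoc]
    ring

noncomputable def stirlingApprox (z : ℂ) : ℂ :=
  (z - 1 / 2) * log z - z + (Real.log (2 * Real.pi) : ℂ) / 2

lemma tendsto_stirlingRemainder {z : ℂ} (hz : z ∈ slitPlane) :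
    Tendsto (stirlingRemainder z) atTop (𝓝 (stirlingApprox z)) := by
  have hdiv : Tendsto (fun N : ℕ => z / N) atTop (𝓝 0) := tendsto_const_div_atTop_nhds_zero_nat z
  have hlog : Tendsto (fun N : ℕ => log (1 + z / N)) atTop (𝓝 0) := by
    have h1 : Tendsto (fun N : ℕ => 1 + z / N) atTop (𝓝 1) := by simpa using hdiv.const_add 1
    simpa [Function.comp_def] using (continuousAt_clog one_mem_slitPlane).tendsto.comp h1
  have hmullog : Tendsto (fun N : ℕ => N * log (1 + z / N) - z) atTop (𝓝 0) := by
    have hmul : Tendsto (fun N : ℕ => (N : ℂ) * (z / N)) atTop (𝓝 z) :=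
      tendsto_const_nhds.congr' <| by
        filter_upwards [eventually_ne_atTop 0] with N hN
        field_simp
    simpa using (tendsto_nat_mul_log_one_add_of_tendsto hmul).sub_const z
  have hγ : Tendsto
      (fun N : ℕ => ((harmonic N - Real.log N - Real.eulerMascheroniConstant : ℝ) : ℂ))
      atTop (𝓝 0) := by
    have h := Real.tendsto_harmonic_sub_log.sub_const Real.eulerMascheroniConstant
    rw [sub_self] at h
    rw [← ofReal_zero]
    exact (continuous_ofReal.tendsto 0).comp h
  have hfact := (continuous_ofReal.tendsto _).comp Real.tendsto_log_factorial_add_sub_mul_log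
  -- For `N ≠ 0`, `stirlingRemainder z N` equals `(z - 1/2) log z - z + z (H_N - log N - γ)
  -- + (log N! + N - (N + 1/2) log N) - (z + 1/2) log (1 + z/N) - (N log (1 + z/N) - z)`.
  have hlim := ((((tendsto_const_nhds (x := (z - 1 / 2) * log z - z)).add (hγ.const_mul z)).add
    hfact).sub (hlog.const_mul (z + 1 / 2))).sub hmullog
  simp only [mul_zero, add_zero, sub_zero] at hlim
  rw [stirlingApprox]
  push_cast at hlim
  refine hlim.congr' ?_
  filter_upwards [eventually_ne_atTop 0] with N hN
  have hN : (0 : ℝ) < N := Nat.cast_pos.2 (Nat.pos_of_ne_zero hN)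
  have hzN : z + ((N : ℝ) : ℂ) ≠ 0 := slitPlane_ne_zero (add_ofReal_mem_slitPlane hz hN.le)
  have hsplit := log_one_add_div_ofReal hN hzN
  push_cast at hsplit
  simp only [Function.comp_apply, stirlingRemainder, hsplit]
  push_cast
  ring

lemma tendsto_sum_stirlingTerm {z : ℂ} (hz : z ∈ slitPlane) :
    Tendsto (fun N : ℕ => ∑ n ∈ range N, stirlingTerm (z + n)) atTop
      (𝓝 (logGamma z - stirlingApprox z)) :=
  ((tendsto_logGammaPartialSum z).sub (tendsto_stirlingRemainder hz)).congr fun N => by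
    rw [logGammaPartialSum_eq_sum_stirlingTerm_add hz, add_sub_cancel_right]

theorem stmt_13 :
    ∀ z : ℂ, ¬(z.im = 0 ∧ z.re ≤ 0) →
      ‖logGamma z - ((z - 1 / 2) * Complex.log z - z + (Real.log (2 * Real.pi) : ℂ) / 2)‖
        ≤ Real.pi / 8 * (1 / Metric.infDist z {w : ℂ | w.im = 0 ∧ w.re ≤ 0}) := by
  intro z hz
  replace hz : z ∈ slitPlane := by rwa [← Set.notMem_compl_iff, compl_slitPlane]
  rw [← compl_slitPlane]
  refine le_of_tendsto' (tendsto_sum_stirlingTerm hz).norm fun N => ?_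
  exact (norm_sum_le _ _).trans (sum_norm_stirlingTerm_le hz N)
end
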